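/- arXiv:1701.04374 — 7 statements merged into one kernel-verified Lean document; each statement's English description precedes it below -/
import Mathlib

section
/- Let k ≥ 1, let φ_1, …, φ_k ∈ (−π, π] be pairwise distinct real numbers and let b_1, …, b_k be nonzero complex numbers. For n ∈ ℤ_{≥0} set c_n = ∑_{j=1}^k b_j·exp(i·φ_j·n). Suppose that liminf_{n→∞} Re(c_n) ≥ 0 and lim_{n→∞} Im(c_n) = 0. Then every c_n is a nonnegative real number, and there exists δ > 0 such that the set E_δ = {n ∈ ℤ_{≥0} : c_n ≥ δ} is relatively dense in [0,∞), i.e. there is K ≥ 0 such that every x ∈ [0,∞) satisfies |x − n| ≤ K for some n ∈ E_δ. -/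
open Complex Filter

noncomputable def uu (k : ℕ) (φ : Fin k → ℝ) (n : ℕ) : Fin k → ℂ :=
  fun j => Complex.exp (Complex.I * (φ j : ℂ) * (n : ℂ))

lemma uu_norm (k : ℕ) (φ : Fin k → ℝ) (n : ℕ) (j : Fin k) : ‖uu k φ n j‖ = 1 := by
  have h : Complex.I * (φ j : ℂ) * (n : ℂ) = ((φ j * n : ℝ) : ℂ) * Complex.I := by
    push_cast; ring
  rw [uu, h, Complex.norm_exp_ofReal_mul_I]

lemma uu_add (k : ℕ) (φ : Fin k → ℝ) (s t : ℕ) (j : Fin k) :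
    uu k φ (s + t) j = uu k φ s j * uu k φ t j := by
  simp only [uu]
  rw [← Complex.exp_add]
  congr 1
  push_cast
  ring

lemma uu_dist (k : ℕ) (φ : Fin k → ℝ) (s t : ℕ) (j : Fin k) :
    ‖uu k φ s j - 1‖ = dist (uu k φ (s + t) j) (uu k φ t j) := by
  rw [dist_eq_norm, uu_add,
    show uu k φ s j * uu k φ t j - uu k φ t j = (uu k φ s j - 1) * uu k φ t j by ring,
    norm_mul, uu_norm, mul_one]

lemma recurrence (k : ℕ) (φ : Fin k → ℝ) {ε : ℝ} (hε : 0 < ε) :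
    ∃ M : ℕ, ∀ m : ℕ, ∃ s : ℕ, m ≤ s ∧ s ≤ m + M ∧
      ∀ j, ‖Complex.exp (Complex.I * (φ j : ℂ) * (s : ℂ)) - 1‖ < ε := by
  set u := uu k φ with hu
  have hbdd : Bornology.IsBounded (Set.range u) := by
    rw [isBounded_iff_forall_norm_le]
    refine ⟨1, ?_⟩
    rintro x ⟨n, rfl⟩
    apply pi_norm_le_iff_of_nonneg (by norm_num) |>.2
    intro j
    rw [show u n j = uu k φ n j from rfl, uu_norm]
  have hcomp : IsCompact (closure (Set.range u)) := hbdd.isCompact_closure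
  have hcover : closure (Set.range u) ⊆ ⋃ n : ℕ, Metric.ball (u n) (ε / 2) := by
    intro y hy
    obtain ⟨x, hx, hdx⟩ := Metric.mem_closure_iff.1 hy (ε / 2) (by linarith)
    obtain ⟨n, rfl⟩ := hx
    exact Set.mem_iUnion.2 ⟨n, by simpa [Metric.mem_ball, dist_comm] using hdx⟩
  obtain ⟨t, ht⟩ := hcomp.elim_finite_subcover (fun n : ℕ => Metric.ball (u n) (ε / 2))
    (fun n => Metric.isOpen_ball) hcover
  refine ⟨t.sup id, ?_⟩
  intro m
  set M := t.sup id with hM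
  have hmem : u (m + M) ∈ closure (Set.range u) := subset_closure (Set.mem_range_self _)
  obtain ⟨i, hit, hball⟩ := Set.mem_iUnion₂.1 (ht hmem)
  have hiM : i ≤ M := Finset.le_sup (f := id) hit
  refine ⟨m + M - i, by omega, by omega, ?_⟩
  intro j
  have hdist : dist (u (m + M)) (u i) < ε / 2 := by
    simpa [Metric.mem_ball] using hball
  have key : ‖uu k φ (m + M - i) j - 1‖ = dist (u (m + M) j) (u i j) := by
    rw [uu_dist k φ (m + M - i) i j]
    congr 2
    omega
  calc ‖Complex.exp (Complex.I * (φ j : ℂ) * ((m + M - i : ℕ) : ℂ)) - 1‖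
      = dist (u (m + M) j) (u i j) := key
    _ ≤ dist (u (m + M)) (u i) := dist_le_pi_dist _ _ j
    _ < ε / 2 := hdist
    _ < ε := by linarith

lemma nexp1 (r : ℝ) (n : ℕ) : ‖Complex.exp (Complex.I * (r : ℂ) * (n : ℂ))‖ = 1 := by
  have h : Complex.I * (r : ℂ) * (n : ℂ) = ((r * n : ℝ) : ℂ) * Complex.I := by
    push_cast; ring
  rw [h, Complex.norm_exp_ofReal_mul_I]

lemma diff_bound (k : ℕ) (φ : Fin k → ℝ) (b : Fin k → ℂ) (c : ℕ → ℂ)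
    (hc : ∀ n : ℕ, c n = ∑ j, b j * Complex.exp (Complex.I * (φ j : ℂ) * (n : ℂ)))
    (m s : ℕ) {ε : ℝ}
    (hs : ∀ j, ‖Complex.exp (Complex.I * (φ j : ℂ) * (s : ℂ)) - 1‖ ≤ ε) :
    ‖c (m + s) - c m‖ ≤ (∑ j, ‖b j‖) * ε := by
  rw [hc, hc, ← Finset.sum_sub_distrib]
  refine (norm_sum_le _ _).trans ?_
  rw [Finset.sum_mul]
  apply Finset.sum_le_sum
  intro j _
  have hadd : Complex.exp (Complex.I * (φ j : ℂ) * ((m + s : ℕ) : ℂ)) =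
      Complex.exp (Complex.I * (φ j : ℂ) * (m : ℂ)) *
        Complex.exp (Complex.I * (φ j : ℂ) * (s : ℂ)) := by
    rw [← Complex.exp_add]; congr 1; push_cast; ring
  have hterm : b j * Complex.exp (Complex.I * (φ j : ℂ) * ((m + s : ℕ) : ℂ)) -
      b j * Complex.exp (Complex.I * (φ j : ℂ) * (m : ℂ)) =
      (b j * Complex.exp (Complex.I * (φ j : ℂ) * (m : ℂ))) *
        (Complex.exp (Complex.I * (φ j : ℂ) * (s : ℂ)) - 1) := by
    rw [hadd]; ring
  rw [hterm, norm_mul, norm_mul, nexp1, mul_one]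
  exact mul_le_mul_of_nonneg_left (hs j) (norm_nonneg _)

theorem statement2 (k : ℕ) (hk : 1 ≤ k) (φ : Fin k → ℝ) (b : Fin k → ℂ)
    (hφmem : ∀ j, φ j ∈ Set.Ioc (-Real.pi) Real.pi)
    (hφinj : Function.Injective φ)
    (hb : ∀ j, b j ≠ 0)
    (c : ℕ → ℂ)
    (hc : ∀ n : ℕ, c n = ∑ j, b j * Complex.exp (Complex.I * (φ j : ℂ) * (n : ℂ)))
    (hre : 0 ≤ Filter.liminf (fun n => (c n).re) Filter.atTop)
    (him : Filter.Tendsto (fun n => (c n).im) Filter.atTop (nhds 0)) :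
    (∀ n, (c n).im = 0 ∧ 0 ≤ (c n).re) ∧
      ∃ δ : ℝ, 0 < δ ∧ ∃ K : ℝ, 0 ≤ K ∧
        ∀ x : ℝ, 0 ≤ x → ∃ n : ℕ, δ ≤ (c n).re ∧ |x - (n : ℝ)| ≤ K := by
  set B := ∑ j, ‖b j‖ with hB
  have hB0 : 0 ≤ B := Finset.sum_nonneg fun j _ => norm_nonneg _
  have hcb : ∀ n, ‖c n‖ ≤ B := by
    intro n
    rw [hc]
    refine (norm_sum_le _ _).trans (Finset.sum_le_sum fun j _ => ?_)
    rw [norm_mul, nexp1, mul_one]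
  -- approximation: values of c recur at arbitrarily large times
  have approx : ∀ m : ℕ, ∀ ε : ℝ, 0 < ε → ∀ N : ℕ, ∃ n : ℕ, N ≤ n ∧ ‖c n - c m‖ ≤ ε := by
    intro m ε hε N
    have hε' : 0 < ε / (B + 1) := by positivity
    obtain ⟨M, hM⟩ := recurrence k φ hε'
    obtain ⟨s, hs1, _, hs3⟩ := hM N
    refine ⟨m + s, le_trans hs1 (Nat.le_add_left s m), ?_⟩
    have h1 := diff_bound k φ b c hc m s (fun j => (hs3 j).le)
    calc ‖c (m + s) - c m‖ ≤ B * (ε / (B + 1)) := h1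
      _ ≤ ε := by
          rw [div_eq_inv_mul, ← mul_assoc]
          have : B * (B + 1)⁻¹ ≤ 1 := by
            rw [mul_inv_le_iff₀ (by linarith), one_mul]; linarith
          nlinarith
  have part1 : ∀ m, (c m).im = 0 ∧ 0 ≤ (c m).re := by
    intro m
    constructor
    · have habs : ∀ ε : ℝ, 0 < ε → |(c m).im| ≤ 0 + ε := by
        intro ε hε
        have h2 : ∀ᶠ n in atTop, |(c n).im| < ε / 2 := by
          have := Metric.tendsto_nhds.mp him (ε / 2) (by linarith)
          simpa [Real.dist_eq] using this
        obtain ⟨N, hN⟩ := eventually_atTop.mp h2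
        obtain ⟨n, hn1, hn2⟩ := approx m (ε / 2) (by linarith) N
        have h3 : |(c m).im - (c n).im| ≤ ε / 2 := by
          have h4 : |(c m - c n).im| ≤ ‖c m - c n‖ := Complex.abs_im_le_norm _
          rw [Complex.sub_im] at h4
          calc |(c m).im - (c n).im| ≤ ‖c m - c n‖ := h4
            _ = ‖c n - c m‖ := norm_sub_rev _ _
            _ ≤ ε / 2 := hn2
        calc |(c m).im| = |((c m).im - (c n).im) + (c n).im| := by ring_nf
          _ ≤ |(c m).im - (c n).im| + |(c n).im| := abs_add_le _ _
          _ ≤ ε / 2 + ε / 2 := add_le_add h3 (hN n hn1).le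
          _ = 0 + ε := by ring
      have := le_of_forall_pos_le_add habs
      exact abs_eq_zero.mp (le_antisymm this (abs_nonneg _))
    · have habs : ∀ ε : ℝ, 0 < ε → -(c m).re ≤ 0 + ε := by
        intro ε hε
        have hbdd : IsBoundedUnder (· ≥ ·) atTop (fun n => (c n).re) := by
          refine ⟨-B, eventually_map.2 (Eventually.of_forall fun n => ?_)⟩
          exact (abs_le.mp (le_trans (Complex.abs_re_le_norm (c n)) (hcb n))).1
        have h2 : ∀ᶠ n in atTop, -(ε / 2) < (c n).re :=
          eventually_lt_of_lt_liminf (lt_of_lt_of_le (by linarith) hre) hbdd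
        obtain ⟨N, hN⟩ := eventually_atTop.mp h2
        obtain ⟨n, hn1, hn2⟩ := approx m (ε / 2) (by linarith) N
        have h3 : |(c m).re - (c n).re| ≤ ε / 2 := by
          have h4 : |(c m - c n).re| ≤ ‖c m - c n‖ := Complex.abs_re_le_norm _
          rw [Complex.sub_re] at h4
          calc |(c m).re - (c n).re| ≤ ‖c m - c n‖ := h4
            _ = ‖c n - c m‖ := norm_sub_rev _ _
            _ ≤ ε / 2 := hn2
        have h5 := abs_le.mp h3
        have h6 := hN n hn1
        linarith [h5.1]
      have h7 := le_of_forall_pos_le_add habs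
      linarith
  refine ⟨part1, ?_⟩
  -- find m0 with (c m0).re > 0
  have hex : ∃ m0 : ℕ, 0 < (c m0).re := by
    by_contra h
    push_neg at h
    have hz : ∀ n, c n = 0 := by
      intro n
      have h1 := (part1 n).1
      have h2 := le_antisymm (h n) (part1 n).2
      exact Complex.ext (by simp [← h2]) (by simp [h1])
    set z : Fin k → ℂ := fun j => Complex.exp (Complex.I * (φ j : ℂ)) with hzdef
    have hzinj : Function.Injective z := by
      intro i j hij
      apply hφinj
      have h1 : Complex.exp (Complex.I * (φ i : ℂ) - Complex.I * (φ j : ℂ)) = 1 := by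
        rw [Complex.exp_sub]
        show z i / z j = 1
        rw [hij]
        exact div_self (Complex.exp_ne_zero _)
      obtain ⟨n, hn⟩ := Complex.exp_eq_one_iff.mp h1
      have h2 : ((φ i - φ j : ℝ) : ℂ) = ((n * (2 * Real.pi) : ℝ) : ℂ) := by
        have h3 : Complex.I * ((φ i : ℂ) - (φ j : ℂ)) = Complex.I * ((n : ℂ) * (2 * (Real.pi : ℂ))) := by
          rw [mul_sub]
          rw [hn]
          push_cast
          ring
        have := mul_left_cancel₀ Complex.I_ne_zero h3
        push_cast
        push_cast at this
        linear_combination this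
      have h4 : φ i - φ j = n * (2 * Real.pi) := by exact_mod_cast h2
      have hpi := Real.pi_pos
      obtain ⟨hi1, hi2⟩ := hφmem i
      obtain ⟨hj1, hj2⟩ := hφmem j
      have hn0 : n = 0 := by
        by_contra hn0
        have : 1 ≤ |(n : ℝ)| := by
          rw [← Int.cast_abs]
          exact_mod_cast Int.one_le_abs (by exact_mod_cast hn0)
        have habs : |φ i - φ j| < 2 * Real.pi := by
          rw [abs_lt]; constructor <;> linarith
        rw [h4, abs_mul, abs_of_pos (by linarith : (0:ℝ) < 2 * Real.pi)] at habs
        nlinarith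
      rw [hn0] at h4
      push_cast at h4
      linarith
    have hsum : ∀ n : ℕ, ∑ j, b j * z j ^ n = 0 := by
      intro n
      rw [← hz n, hc]
      apply Finset.sum_congr rfl
      intro j _
      congr 1
      rw [hzdef]
      rw [← Complex.exp_nat_mul]
      congr 1
      ring
    set A : Matrix (Fin k) (Fin k) ℂ := (Matrix.vandermonde z).transpose with hA
    have hdet : A.det ≠ 0 := by
      rw [hA, Matrix.det_transpose]
      exact Matrix.det_vandermonde_ne_zero_iff.mpr hzinj
    have hmv : A.mulVec b = 0 := by
      funext i
      simp only [hA, Matrix.mulVec, dotProduct, Matrix.transpose_apply,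
        Matrix.vandermonde_apply, Pi.zero_apply]
      rw [← hsum i]
      apply Finset.sum_congr rfl
      intro j _
      ring
    have hbz : b = 0 := by
      have hinj := Matrix.mulVec_injective_iff_isUnit.mpr
        ((Matrix.isUnit_iff_isUnit_det A).mpr (isUnit_iff_ne_zero.mpr hdet))
      have : A.mulVec b = A.mulVec 0 := by rw [hmv, Matrix.mulVec_zero]
      exact hinj this
    exact hb ⟨0, hk⟩ (by rw [hbz]; rfl)
  obtain ⟨m0, hm0⟩ := hex
  set δ := (c m0).re / 2 with hδ
  refine ⟨δ, by positivity, ?_⟩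
  have hε' : 0 < (c m0).re / (2 * (B + 1)) := by positivity
  obtain ⟨M, hM⟩ := recurrence k φ hε'
  refine ⟨(M : ℝ) + (m0 : ℝ) + 1, by positivity, ?_⟩
  intro x hx
  obtain ⟨s, hs1, hs2, hs3⟩ := hM ⌈x⌉₊
  refine ⟨m0 + s, ?_, ?_⟩
  · have h1 := diff_bound k φ b c hc m0 s (fun j => (hs3 j).le)
    have h2 : B * ((c m0).re / (2 * (B + 1))) ≤ δ := by
      rw [hδ, mul_div_assoc', div_le_div_iff₀ (by linarith) (by norm_num : (0:ℝ) < 2)]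
      nlinarith
    have h3 : |(c (m0 + s)).re - (c m0).re| ≤ δ := by
      have h4 : |(c (m0 + s) - c m0).re| ≤ ‖c (m0 + s) - c m0‖ := Complex.abs_re_le_norm _
      rw [Complex.sub_re] at h4
      linarith
    have := abs_le.mp h3
    have : (c m0).re = 2 * δ := by rw [hδ]; ring
    linarith [abs_le.mp h3 |>.1]
  · have hx1 : x ≤ (⌈x⌉₊ : ℝ) := Nat.le_ceil x
    have hx2 : (⌈x⌉₊ : ℝ) < x + 1 := Nat.ceil_lt_add_one hx
    have hs1' : (⌈x⌉₊ : ℝ) ≤ (s : ℝ) := by exact_mod_cast hs1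
    have hs2' : (s : ℝ) ≤ (⌈x⌉₊ : ℝ) + (M : ℝ) := by
      have : (s : ℝ) ≤ ((⌈x⌉₊ + M : ℕ) : ℝ) := by exact_mod_cast hs2
      push_cast at this
      linarith
    have h9 : (0:ℝ) ≤ ((m0 + s : ℕ) : ℝ) - x := by push_cast; linarith
    rw [abs_sub_comm, _root_.abs_of_nonneg h9]
    push_cast
    linarith
end

section
/- Let k ≥ 1, let φ_1, …, φ_k be real numbers and let b_1, …, b_k be complex numbers, and define c : ℝ → ℂ by c(t) = ∑_{j=1}^k b_j·exp(i·φ_j·t). Then for every ε > 0 the set of integer translation numbers {n ∈ ℤ : |c(x+n) − c(x)| ≤ ε for all x ∈ ℝ} is relatively dense in ℝ, i.e. there is K ≥ 0 such that every x ∈ ℝ is within distance K of some integer n with sup_{y∈ℝ} |c(y+n) − c(y)| ≤ ε. -/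
/-!
The vector `(exp (i φ_j))_j` lives in the compact group `Circleᵏ`. By compactness, the closure
of its orbit under `ℤ` is covered by finitely many translates `U xʳ`, where `U` is the
neighbourhood of `1` on which `∑ ‖b_j‖ ‖z_j - 1‖ ≤ ε`; so every integer is within `max |r|` of a
return time to `U`. A return time `n` is a translation number, since
`‖c (y + n) - c y‖ ≤ ∑ ‖b_j‖ ‖exp (i φ_j n) - 1‖`.
-/

open Filter Topology Finset

theorem exists_finset_zpow_sub_mem {G : Type*} [Group G] [TopologicalSpace G]
    [IsTopologicalGroup G] [CompactSpace G] (x : G) {U : Set G} (hU : U ∈ 𝓝 1) :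
    ∃ R : Finset ℤ, ∀ m : ℤ, ∃ r ∈ R, x ^ (m - r) ∈ U := by
  set O : ℤ → Set G := fun r => (· * (x ^ r)⁻¹) ⁻¹' interior U
  have hO : ∀ r, IsOpen (O r) := fun r =>
    isOpen_interior.preimage (continuous_id.mul continuous_const)
  have hcover : closure (Set.range (x ^ · : ℤ → G)) ⊆ ⋃ r, O r := by
    intro g hg
    have hnhds : {h : G | g * h⁻¹ ∈ interior U} ∈ 𝓝 g :=
      (continuous_const.mul continuous_inv).continuousAt.preimage_mem_nhds
        (by simpa using interior_mem_nhds.mpr hU)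
    obtain ⟨_, hgr, r, rfl⟩ := mem_closure_iff_nhds.mp hg _ hnhds
    exact Set.mem_iUnion.mpr ⟨r, hgr⟩
  obtain ⟨R, hR⟩ := isClosed_closure.isCompact.elim_finite_subcover O hO hcover
  refine ⟨R, fun m => ?_⟩
  obtain ⟨r, hr, hmr⟩ := Set.mem_iUnion₂.mp (hR (subset_closure ⟨m, rfl⟩))
  exact ⟨r, hr, interior_subset (by simpa [O, zpow_sub] using hmr)⟩

theorem exists_abs_sub_int_le_of_forall_exists_sub {P : ℤ → Prop} (R : Finset ℤ)
    (hR : ∀ m : ℤ, ∃ r ∈ R, P (m - r)) :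
    ∃ K : ℝ, 0 ≤ K ∧ ∀ x : ℝ, ∃ n : ℤ, |x - n| ≤ K ∧ P n := by
  refine ⟨1 + ∑ r ∈ R, |(r : ℝ)|, by positivity, fun x => ?_⟩
  obtain ⟨r, hr, hP⟩ := hR (round x)
  refine ⟨round x - r, ?_, hP⟩
  have hround : |x - round x| ≤ 1 := (abs_sub_round x).trans (by norm_num)
  have hr_le : |(r : ℝ)| ≤ ∑ r ∈ R, |(r : ℝ)| :=
    single_le_sum (f := fun r : ℤ => |(r : ℝ)|) (fun _ _ => abs_nonneg _) hr
  calc |x - ((round x - r : ℤ) : ℝ)| = |(x - round x) + r| := by push_cast; ring_nf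
    _ ≤ |x - round x| + |(r : ℝ)| := abs_add_le _ _
    _ ≤ 1 + ∑ r ∈ R, |(r : ℝ)| := add_le_add hround hr_le

theorem norm_sum_mul_exp_add_sub_le {ι : Type*} (s : Finset ι) (φ : ι → ℝ) (b : ι → ℂ)
    (y t : ℝ) :
    ‖∑ j ∈ s, b j * Complex.exp (Complex.I * φ j * ↑(y + t))
        - ∑ j ∈ s, b j * Complex.exp (Complex.I * φ j * y)‖
      ≤ ∑ j ∈ s, ‖b j‖ * ‖Complex.exp (Complex.I * φ j * t) - 1‖ := by
  rw [← sum_sub_distrib]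
  refine (norm_sum_le _ _).trans (sum_le_sum fun j _ => le_of_eq ?_)
  have hunit : ‖Complex.exp (Complex.I * φ j * y)‖ = 1 := by
    rw [show Complex.I * φ j * y = ((φ j * y : ℝ) : ℂ) * Complex.I by push_cast; ring,
      Complex.norm_exp_ofReal_mul_I]
  rw [Complex.ofReal_add, mul_add, Complex.exp_add,
    show ∀ u v : ℂ, b j * (u * v) - b j * u = b j * u * (v - 1) by intros; ring,
    norm_mul, norm_mul, hunit, mul_one]

theorem statement3_general (k : ℕ) (φ : Fin k → ℝ) (b : Fin k → ℂ)
    (c : ℝ → ℂ)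
    (hc : ∀ t : ℝ, c t = ∑ j, b j * Complex.exp (Complex.I * (φ j : ℂ) * (t : ℂ))) :
    ∀ ε : ℝ, 0 < ε → ∃ K : ℝ, 0 ≤ K ∧ ∀ x : ℝ, ∃ n : ℤ,
      |x - (n : ℝ)| ≤ K ∧ ∀ y : ℝ, ‖c (y + (n : ℝ)) - c y‖ ≤ ε := by
  intro ε hε
  set U : Set (Fin k → Circle) := {z | ∑ j, ‖b j‖ * ‖(z j : ℂ) - 1‖ ≤ ε}
  have hU : U ∈ 𝓝 1 := by
    have hf : Continuous fun z : Fin k → Circle => ∑ j, ‖b j‖ * ‖(z j : ℂ) - 1‖ := by fun_prop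
    exact hf.continuousAt.preimage_mem_nhds (Iic_mem_nhds (by simpa using hε))
  obtain ⟨R, hR⟩ := exists_finset_zpow_sub_mem (fun j => Circle.exp (φ j)) hU
  obtain ⟨K, hK, hnear⟩ := exists_abs_sub_int_le_of_forall_exists_sub
    (P := fun n => (fun j => Circle.exp (φ j)) ^ n ∈ U) R hR
  refine ⟨K, hK, fun x => ?_⟩
  obtain ⟨n, hxn, hn⟩ := hnear x
  refine ⟨n, hxn, fun y => ?_⟩
  rw [hc, hc]
  refine (norm_sum_mul_exp_add_sub_le _ φ b y n).trans ?_
  have hpow : ∀ j, (((fun j => Circle.exp (φ j)) ^ n) j : ℂ)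
      = Complex.exp (Complex.I * φ j * (n : ℝ)) := fun j => by
    rw [Pi.pow_apply, ← Circle.exp_intCast_mul, Circle.coe_exp]
    push_cast; ring_nf
  simpa only [U, Set.mem_ofPred_eq, hpow] using hn

theorem statement3 (k : ℕ) (hk : 1 ≤ k) (φ : Fin k → ℝ) (b : Fin k → ℂ)
    (c : ℝ → ℂ)
    (hc : ∀ t : ℝ, c t = ∑ j, b j * Complex.exp (Complex.I * (φ j : ℂ) * (t : ℂ))) :
    ∀ ε : ℝ, 0 < ε → ∃ K : ℝ, 0 ≤ K ∧ ∀ x : ℝ, ∃ n : ℤ,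
      |x - (n : ℝ)| ≤ K ∧ ∀ y : ℝ, ‖c (y + (n : ℝ)) - c y‖ ≤ ε :=
  statement3_general k φ b c hc
end

section
/- Let (a_n)_{n=0}^∞ be a submultiplicative sequence of real numbers with a_n ≥ 1 for all n, i.e. a_{m+n} ≤ a_m·a_n for all m, n ≥ 0. Let α ∈ ℤ_{≥0}, λ ∈ [1,∞) and let (c_n)_{n=0}^∞ be a sequence of real numbers such that a_n/(n^α·λ^n) − c_n → 0 as n → ∞. Suppose there exist δ > 0 and N ∈ ℤ_{≥1} such that for every n ∈ ℤ_{≥0} there is β ∈ {0, 1, …, N} with c_{n+β} ≥ δ. Then liminf_{n→∞} a_n/(n^α·λ^n) > 0. -/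
theorem statement7 (a : ℕ → ℝ) (ha : ∀ n, 1 ≤ a n)
    (hsub : ∀ m n : ℕ, a (m + n) ≤ a m * a n)
    (α : ℕ) (lam : ℝ) (hlam : 1 ≤ lam) (c : ℕ → ℝ)
    (hconv : Filter.Tendsto (fun n : ℕ => a n / ((n : ℝ) ^ α * lam ^ n) - c n)
      Filter.atTop (nhds 0))
    (δ : ℝ) (hδ : 0 < δ) (N : ℕ) (hN : 1 ≤ N)
    (hdense : ∀ n : ℕ, ∃ β : ℕ, β ≤ N ∧ δ ≤ c (n + β)) :
    ∃ C : ℝ, 0 < C ∧ ∀ᶠ n : ℕ in Filter.atTop,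
      C ≤ a n / ((n : ℝ) ^ α * lam ^ n) := by
  set M : ℝ := (Finset.range (N + 1)).sup' ⟨0, by simp⟩ a with hMdef
  have hM1 : (1 : ℝ) ≤ M :=
    le_trans (ha 0) (Finset.le_sup' a (by simp : 0 ∈ Finset.range (N + 1)))
  have hM2 : ∀ β ≤ N, a β ≤ M := fun β hβ =>
    Finset.le_sup' a (Finset.mem_range.mpr (Nat.lt_succ_of_le hβ))
  obtain ⟨K, hK⟩ := Metric.tendsto_atTop.mp hconv (δ / 2) (by positivity)
  refine ⟨δ / (2 * M), by positivity, ?_⟩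
  filter_upwards [Filter.eventually_ge_atTop (max K 1)] with n hn
  have hnK : K ≤ n := le_trans (le_max_left _ _) hn
  have hn1 : 1 ≤ n := le_trans (le_max_right _ _) hn
  obtain ⟨β, hβN, hβc⟩ := hdense n
  have hd := hK (n + β) (le_trans hnK (Nat.le_add_right n β))
  rw [Real.dist_eq, sub_zero] at hd
  have hn0 : (0 : ℝ) < (n : ℝ) := by exact_mod_cast hn1
  have hlam0 : (0 : ℝ) < lam := lt_of_lt_of_le one_pos hlam
  have hD1 : (0 : ℝ) < (n : ℝ) ^ α * lam ^ n :=
    mul_pos (pow_pos hn0 α) (pow_pos hlam0 n)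
  have hD2 : (0 : ℝ) < ((n + β : ℕ) : ℝ) ^ α * lam ^ (n + β) := by
    have : (0 : ℝ) < ((n + β : ℕ) : ℝ) := by positivity
    exact mul_pos (pow_pos this α) (pow_pos hlam0 (n + β))
  have hD12 : (n : ℝ) ^ α * lam ^ n ≤ ((n + β : ℕ) : ℝ) ^ α * lam ^ (n + β) := by
    apply mul_le_mul
    · apply pow_le_pow_left₀ hn0.le
      push_cast; linarith [Nat.cast_nonneg (α := ℝ) β]
    · exact pow_le_pow_right₀ hlam (Nat.le_add_right n β)
    · positivity
    · positivity
  have hb : δ / 2 ≤ a (n + β) / (((n + β : ℕ) : ℝ) ^ α * lam ^ (n + β)) := by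
    have := abs_lt.mp hd
    linarith [this.1, this.2]
  have h2 : δ / 2 * (((n + β : ℕ) : ℝ) ^ α * lam ^ (n + β)) ≤ a (n + β) :=
    (le_div_iff₀ hD2).mp hb
  have h3 : a (n + β) ≤ a n * a β := hsub n β
  have h4 : a β ≤ M := hM2 β hβN
  have han : 0 < a n := lt_of_lt_of_le one_pos (ha n)
  rw [div_le_div_iff₀ (by positivity) hD1]
  nlinarith [mul_le_mul_of_nonneg_left h4 han.le,
    mul_le_mul_of_nonneg_left hD12 (le_of_lt (by linarith : (0:ℝ) < δ / 2))]
end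

section
/- Fix constants α_H, α_K ∈ ℤ_{≥0}, real numbers λ_H > λ_K ≥ 1 and D > 0. Then there exists a constant D̃ > 0, depending only on D, α_H, α_K, λ_H, λ_K, with the following property: for every group G with finite generating set X and subgroups H, K ≤ G such that (h,k) ↦ hk defines an injective group homomorphism H × K → G, such that |hk|_X = |h|_X + |k|_X for all h ∈ H and k ∈ K, and such that |H ∩ S_{G,X}(n)| ≤ D·n^{α_H}·λ_H^n and |K ∩ S_{G,X}(n)| ≤ D·n^{α_K}·λ_K^n for all n ≥ 1, one has |{hk : h ∈ H, k ∈ K} ∩ S_{G,X}(n)| ≤ D̃·n^{α_H}·λ_H^n for all n ≥ 1. -/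
open Pointwise

/-- The word length of `g` with respect to a generating set `X`: the least `n` such that
`g` is a product of `n` elements of `X ∪ X⁻¹`. -/
noncomputable def wordLength {G : Type*} [Group G] (X : Set G) (g : G) : ℕ :=
  sInf {n | ∃ l : List G, l.length = n ∧ (∀ x ∈ l, x ∈ X ∨ x⁻¹ ∈ X) ∧ l.prod = g}

/-- The sphere of radius `n` in `G` with respect to `X`. -/
noncomputable def sphere {G : Type*} [Group G] (X : Set G) (n : ℕ) : Set G :=
  {g | wordLength X g = n}

section aux
variable {G : Type*} [Group G] {X : Set G}

lemma aux_exists_rep (hX : Subgroup.closure X = ⊤) (g : G) :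
    ∃ l : List G, (∀ x ∈ l, x ∈ X ∨ x⁻¹ ∈ X) ∧ l.prod = g := by
  have hg : g ∈ Subgroup.closure X := hX ▸ Subgroup.mem_top g
  induction hg using Subgroup.closure_induction with
  | mem x hx => exact ⟨[x], by simpa using Or.inl hx, by simp⟩
  | one => exact ⟨[], by simp, by simp⟩
  | mul x y _ _ hx hy =>
    obtain ⟨l1, h1, e1⟩ := hx
    obtain ⟨l2, h2, e2⟩ := hy
    refine ⟨l1 ++ l2, ?_, by simp [e1, e2]⟩
    intro z hz
    rcases List.mem_append.1 hz with h | h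
    · exact h1 z h
    · exact h2 z h
  | inv x _ hx =>
    obtain ⟨l, h1, e1⟩ := hx
    refine ⟨(l.map Inv.inv).reverse, ?_, by simp [← e1, List.prod_reverse_noncomm]⟩
    intro x hx
    simp only [List.mem_reverse, List.mem_map] at hx
    obtain ⟨y, hy, rfl⟩ := hx
    rcases h1 y hy with h | h
    · exact Or.inr (by simpa using h)
    · exact Or.inl h

lemma aux_wordLength_spec (hX : Subgroup.closure X = ⊤) (g : G) :
    ∃ l : List G, l.length = wordLength X g ∧ (∀ x ∈ l, x ∈ X ∨ x⁻¹ ∈ X) ∧ l.prod = g := by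
  obtain ⟨l, h1, h2⟩ := aux_exists_rep hX g
  have : wordLength X g ∈ {n | ∃ l : List G, l.length = n ∧ (∀ x ∈ l, x ∈ X ∨ x⁻¹ ∈ X) ∧ l.prod = g} :=
    Nat.sInf_mem ⟨l.length, l, rfl, h1, h2⟩
  exact this

lemma aux_wordLength_eq_zero (hX : Subgroup.closure X = ⊤) {g : G}
    (h : wordLength X g = 0) : g = 1 := by
  obtain ⟨l, hl, _, hp⟩ := aux_wordLength_spec hX g
  rw [h, List.length_eq_zero_iff] at hl
  subst hl; simpa using hp.symm

lemma aux_pow_finite {S : Set G} (hS : S.Finite) (n : ℕ) : (S ^ n : Set G).Finite := by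
  induction n with
  | zero => simp [Set.finite_singleton]
  | succ n ih => rw [pow_succ]; exact ih.mul hS

lemma aux_prod_mem_pow {S : Set G} : ∀ l : List G, (∀ x ∈ l, x ∈ S) → l.prod ∈ S ^ l.length := by
  intro l
  induction l with
  | nil => simp
  | cons a l ih =>
    intro h
    rw [List.prod_cons, List.length_cons, pow_succ']
    exact Set.mul_mem_mul (h a (by simp)) (ih fun x hx => h x (by simp [hx]))

lemma aux_sphere_finite (hXf : X.Finite) (hX : Subgroup.closure X = ⊤) (n : ℕ) :
    (sphere X n).Finite := by
  have : sphere X n ⊆ (X ∪ X⁻¹) ^ n := by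
    intro g hg
    obtain ⟨l, hl, hmem, hp⟩ := aux_wordLength_spec hX g
    rw [hg] at hl
    rw [← hp, ← hl]
    exact aux_prod_mem_pow l fun x hx => by
      rcases hmem x hx with h | h
      · exact Set.mem_union_left _ h
      · exact Set.mem_union_right _ (by simpa [Set.mem_inv] using h)
  exact (aux_pow_finite (hXf.union hXf.inv) n).subset this

lemma aux_ncard_mul_le {s t : Set G} (hs : s.Finite) (ht : t.Finite) :
    (s * t).ncard ≤ s.ncard * t.ncard := by
  classical
  rw [Set.ncard_eq_toFinset_card _ (hs.mul ht), Set.Finite.toFinset_mul hs ht,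
    Set.ncard_eq_toFinset_card _ hs, Set.ncard_eq_toFinset_card _ ht]
  exact Finset.card_mul_le

lemma aux_ncard_biUnion_le {α ι : Type*} (s : Finset ι) (A : ι → Set α)
    (h : ∀ i, (A i).Finite) :
    (⋃ i ∈ s, A i).ncard ≤ ∑ i ∈ s, (A i).ncard := by
  classical
  induction s using Finset.induction with
  | empty => simp
  | @insert a s hni ih =>
    rw [Finset.set_biUnion_insert, Finset.sum_insert hni]
    exact (Set.ncard_union_le _ _).trans (by gcongr)

end aux

theorem statement8 (αH αK : ℕ) (lamH lamK D : ℝ)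
    (hlamK : 1 ≤ lamK) (hlam : lamK < lamH) (hD : 0 < D) :
    ∃ Dt : ℝ, 0 < Dt ∧
      ∀ (G : Type*) [Group G] (X : Set G), X.Finite → Subgroup.closure X = ⊤ →
        ∀ H K : Subgroup G,
          (∀ h ∈ H, ∀ k ∈ K, h * k = k * h) →
          Function.Injective (fun p : H × K => (p.1 : G) * (p.2 : G)) →
          (∀ h ∈ H, ∀ k ∈ K, wordLength X (h * k) = wordLength X h + wordLength X k) →
          (∀ n : ℕ, 1 ≤ n →
            (Nat.card (((H : Set G) ∩ sphere X n : Set G)) : ℝ) ≤ D * (n : ℝ) ^ αH * lamH ^ n) →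
          (∀ n : ℕ, 1 ≤ n →
            (Nat.card (((K : Set G) ∩ sphere X n : Set G)) : ℝ) ≤ D * (n : ℝ) ^ αK * lamK ^ n) →
          ∀ n : ℕ, 1 ≤ n →
            (Nat.card ((((H : Set G) * (K : Set G)) ∩ sphere X n : Set G)) : ℝ) ≤
              Dt * (n : ℝ) ^ αH * lamH ^ n := by
  have hlamH0 : (0:ℝ) < lamH := lt_of_le_of_lt (le_trans zero_le_one hlamK) hlam
  have hlamK0 : (0:ℝ) < lamK := lt_of_lt_of_le one_pos hlamK
  set r : ℝ := lamK / lamH with hr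
  have hr0 : 0 < r := div_pos hlamK0 hlamH0
  have hr1 : r < 1 := (div_lt_one hlamH0).2 hlam
  have hsum : Summable (fun j : ℕ => ((j:ℝ)+1)^αK * r^j) := by
    have h1 : Summable (fun j : ℕ => (j:ℝ)^αK * r^j) := by
      simpa using summable_pow_mul_geometric_of_norm_lt_one αK
        (by rwa [Real.norm_eq_abs, abs_of_pos hr0])
    have h2 := ((summable_nat_add_iff 1).2 h1).mul_left (1/r)
    refine h2.congr fun j => ?_
    push_cast
    field_simp
    ring
  set T : ℝ := ∑' j : ℕ, ((j:ℝ)+1)^αK * r^j with hT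
  have hT0 : 0 ≤ T := tsum_nonneg fun j => by positivity
  set C : ℝ := (D+1)^2 with hC
  have hC0 : 0 < C := by positivity
  have hDC : D ≤ C := by nlinarith
  have hD2C : D^2 ≤ C := by nlinarith
  refine ⟨C * (T+1), by positivity, ?_⟩
  intro G _ X hXf hXc H K _hcomm _hinj hlen hH hK n hn
  have hn1 : (1:ℝ) ≤ (n:ℝ) := by exact_mod_cast hn
  have hsphfin : ∀ m, (sphere X m).Finite := aux_sphere_finite hXf hXc
  have hHfin : ∀ m, ((H:Set G) ∩ sphere X m).Finite :=
    fun m => (hsphfin m).subset Set.inter_subset_right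
  have hKfin : ∀ m, ((K:Set G) ∩ sphere X m).Finite :=
    fun m => (hsphfin m).subset Set.inter_subset_right
  set A : ℕ → Set G := fun j => ((H:Set G) ∩ sphere X (n - j)) * ((K:Set G) ∩ sphere X j)
    with hA
  have hAfin : ∀ j, (A j).Finite := fun j => (hHfin _).mul (hKfin _)
  have hsub : ((H:Set G) * (K:Set G)) ∩ sphere X n ⊆ ⋃ j ∈ Finset.range (n+1), A j := by
    rintro g ⟨hg1, hg2⟩
    rw [Set.mem_mul] at hg1
    obtain ⟨h, hh, k, hk, rfl⟩ := hg1
    have hg2' : wordLength X (h * k) = n := hg2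
    have hnj : wordLength X h + wordLength X k = n := by rw [← hlen h hh k hk]; exact hg2'
    have hmem : (h * k) ∈ A (wordLength X k) :=
      Set.mul_mem_mul ⟨hh, show wordLength X h = n - wordLength X k by omega⟩ ⟨hk, rfl⟩
    exact Set.mem_biUnion (Finset.mem_range.2 (by omega)) hmem
  have hcard : (((H:Set G) * (K:Set G)) ∩ sphere X n).ncard ≤ ∑ j ∈ Finset.range (n+1),
      ((H:Set G) ∩ sphere X (n-j)).ncard * ((K:Set G) ∩ sphere X j).ncard := by
    calc (((H:Set G) * (K:Set G)) ∩ sphere X n).ncard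
        ≤ (⋃ j ∈ Finset.range (n+1), A j).ncard := Set.ncard_le_ncard hsub
          (Set.Finite.biUnion (Finset.finite_toSet _) (fun i _ => hAfin i))
      _ ≤ ∑ j ∈ Finset.range (n+1), (A j).ncard := aux_ncard_biUnion_le _ _ hAfin
      _ ≤ _ := Finset.sum_le_sum fun j _ => aux_ncard_mul_le (hHfin _) (hKfin _)
  set a : ℕ → ℝ := fun i => (((H:Set G) ∩ sphere X i).ncard : ℝ) with ha
  set b : ℕ → ℝ := fun i => (((K:Set G) ∩ sphere X i).ncard : ℝ) with hb
  have ha1 : ∀ i, 1 ≤ i → a i ≤ D * (i:ℝ)^αH * lamH^i := by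
    intro i hi
    have := hH i hi
    rwa [Nat.card_coe_set_eq] at this
  have hb1 : ∀ i, 1 ≤ i → b i ≤ D * (i:ℝ)^αK * lamK^i := by
    intro i hi
    have := hK i hi
    rwa [Nat.card_coe_set_eq] at this
  have hzero : ∀ s : Set G, s ∩ sphere X 0 ⊆ {1} := by
    intro s g hg
    exact aux_wordLength_eq_zero hXc hg.2
  have ha0 : a 0 ≤ 1 := by
    have h := Set.ncard_le_ncard (hzero (H:Set G)) (Set.finite_singleton 1)
    rw [Set.ncard_singleton] at h
    simp only [ha]
    exact_mod_cast h
  have hb0 : b 0 ≤ 1 := by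
    have h := Set.ncard_le_ncard (hzero (K:Set G)) (Set.finite_singleton 1)
    rw [Set.ncard_singleton] at h
    simp only [hb]
    exact_mod_cast h
  have hanneg : ∀ i, 0 ≤ a i := fun i => Nat.cast_nonneg _
  have hbnneg : ∀ i, 0 ≤ b i := fun i => Nat.cast_nonneg _
  have hterm : ∀ j ∈ Finset.range (n+1),
      a (n-j) * b j ≤ C * (n:ℝ)^αH * lamH^n * (((j:ℝ)+1)^αK * r^j) := by
    intro j hj
    rw [Finset.mem_range, Nat.lt_succ_iff] at hj
    have hjn : ((j:ℝ)) ≤ (n:ℝ) := Nat.cast_le.2 hj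
    have hpowHK : lamH^(n-j) * lamK^j = lamH^n * r^j := by
      rw [pow_sub₀ _ (ne_of_gt hlamH0) hj, hr, div_pow]
      field_simp
    rcases Nat.eq_zero_or_pos j with rfl | hj1
    · simp only [Nat.sub_zero, pow_zero, mul_one, Nat.cast_zero, zero_add, one_pow]
      calc a n * b 0 ≤ (D * (n:ℝ)^αH * lamH^n) * 1 :=
            mul_le_mul (ha1 n hn) hb0 (hbnneg 0) (by positivity)
        _ ≤ C * (n:ℝ)^αH * lamH^n := by rw [mul_one]; gcongr
    rcases Nat.lt_or_ge (n - j) 1 with hi0 | hi1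
    · have hjn' : j = n := by omega
      rw [hjn', Nat.sub_self]
      calc a 0 * b n ≤ 1 * (D * (n:ℝ)^αK * lamK^n) :=
            mul_le_mul ha0 (hb1 n hn) (hbnneg n) zero_le_one
        _ = D * (n:ℝ)^αK * (lamH^n * r^n) := by
            rw [one_mul]
            congr 1
            have : lamH ^ n * r ^ n = (lamH * r)^n := (mul_pow _ _ _).symm
            rw [this, hr]
            field_simp
        _ ≤ C * (n:ℝ)^αH * lamH^n * (((n:ℝ)+1)^αK * r^n) := by
            have h1 : (n:ℝ)^αK ≤ ((n:ℝ)+1)^αK := by gcongr; linarith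
            have h2 : (1:ℝ) ≤ (n:ℝ)^αH := one_le_pow₀ hn1
            calc D * (n:ℝ)^αK * (lamH^n * r^n)
                ≤ C * ((n:ℝ)+1)^αK * (lamH^n * r^n) := by gcongr
              _ ≤ (C * ((n:ℝ)+1)^αK * (lamH^n * r^n)) * (n:ℝ)^αH := by
                  nlinarith [mul_pos (mul_pos hC0 (pow_pos (by linarith : (0:ℝ) < (n:ℝ)+1) αK))
                    (mul_pos (pow_pos hlamH0 n) (pow_pos hr0 n))]
              _ = C * (n:ℝ)^αH * lamH^n * (((n:ℝ)+1)^αK * r^n) := by ring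
    · -- middle case
      have hinj : ((n-j : ℕ):ℝ) ≤ (n:ℝ) := Nat.cast_le.2 (Nat.sub_le n j)
      calc a (n-j) * b j
          ≤ (D * ((n-j:ℕ):ℝ)^αH * lamH^(n-j)) * (D * (j:ℝ)^αK * lamK^j) :=
            mul_le_mul (ha1 _ hi1) (hb1 _ hj1) (hbnneg j) (by positivity)
        _ = D^2 * ((n-j:ℕ):ℝ)^αH * (j:ℝ)^αK * (lamH^(n-j) * lamK^j) := by ring
        _ ≤ C * (n:ℝ)^αH * ((j:ℝ)+1)^αK * (lamH^n * r^j) := by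
            rw [hpowHK]
            have h1 : ((n-j:ℕ):ℝ)^αH ≤ (n:ℝ)^αH :=
              pow_le_pow_left₀ (Nat.cast_nonneg _) hinj αH
            have h2 : ((j:ℝ))^αK ≤ ((j:ℝ)+1)^αK :=
              pow_le_pow_left₀ (Nat.cast_nonneg _) (by linarith) αK
            gcongr
        _ = C * (n:ℝ)^αH * lamH^n * (((j:ℝ)+1)^αK * r^j) := by ring
  have hsumT : ∑ j ∈ Finset.range (n+1), (((j:ℝ)+1)^αK * r^j) ≤ T :=
    Summable.sum_le_tsum _ (fun i _ => by positivity) hsum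
  calc (Nat.card ((((H : Set G) * (K : Set G)) ∩ sphere X n : Set G)) : ℝ)
      = ((((H:Set G) * (K:Set G)) ∩ sphere X n).ncard : ℝ) := by rw [Nat.card_coe_set_eq]
    _ ≤ ((∑ j ∈ Finset.range (n+1),
          ((H:Set G) ∩ sphere X (n-j)).ncard * ((K:Set G) ∩ sphere X j).ncard : ℕ) : ℝ) :=
        Nat.cast_le.2 hcard
    _ = ∑ j ∈ Finset.range (n+1), a (n-j) * b j := by push_cast; rfl
    _ ≤ ∑ j ∈ Finset.range (n+1), C * (n:ℝ)^αH * lamH^n * (((j:ℝ)+1)^αK * r^j) :=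
        Finset.sum_le_sum hterm
    _ = C * (n:ℝ)^αH * lamH^n * ∑ j ∈ Finset.range (n+1), (((j:ℝ)+1)^αK * r^j) := by
        rw [Finset.mul_sum]
    _ ≤ C * (n:ℝ)^αH * lamH^n * (T+1) := by
        have : (0:ℝ) ≤ C * (n:ℝ)^αH * lamH^n := by positivity
        nlinarith [hsumT]
    _ = C * (T+1) * (n:ℝ)^αH * lamH^n := by ring
end

section
/- Let G be a group with finite generating set X and let H, K ≤ G be subgroups such that (h,k) ↦ hk defines an injective group homomorphism H × K → G and |hk|_X = |h|_X + |k|_X for all h ∈ H and k ∈ K. Suppose there are constants α_H, α_K ∈ ℤ_{≥0}, λ ∈ [1,∞) and C > 0 such that |H ∩ S_{G,X}(n)| ≥ C·n^{α_H}·λ^n and |K ∩ S_{G,X}(n)| ≥ C·n^{α_K}·λ^n for all n ≥ 1. Then |{hk : h ∈ H, k ∈ K} ∩ S_{G,X}(n)| / (n^{α_H}·λ^n) → ∞ as n → ∞; in particular there is no constant D̃ > 0 with |{hk : h ∈ H, k ∈ K} ∩ S_{G,X}(n)| ≤ D̃·n^{α_H}·λ^n for all n ≥ 1. -/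
open Pointwise

lemma exists_list_of_mem_sphere {G : Type*} [Group G] {X : Set G} {n : ℕ} (hn : 1 ≤ n) {g : G}
    (hg : g ∈ sphere X n) :
    ∃ l : List G, l.length = n ∧ (∀ x ∈ l, x ∈ X ∨ x⁻¹ ∈ X) ∧ l.prod = g := by
  have hg' : wordLength X g = n := hg
  have hne : {m | ∃ l : List G, l.length = m ∧ (∀ x ∈ l, x ∈ X ∨ x⁻¹ ∈ X) ∧ l.prod = g}.Nonempty := by
    by_contra h
    rw [Set.not_nonempty_iff_eq_empty] at h
    rw [wordLength, h, Nat.sInf_empty] at hg'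
    omega
  have := Nat.sInf_mem hne
  rwa [show sInf {m | ∃ l : List G, l.length = m ∧ (∀ x ∈ l, x ∈ X ∨ x⁻¹ ∈ X) ∧ l.prod = g} = n from hg'] at this

lemma sphere_finite {G : Type*} [Group G] {X : Set G} (hX : X.Finite) {n : ℕ} (hn : 1 ≤ n) :
    (sphere X n).Finite := by
  have hY : (X ∪ X⁻¹).Finite := hX.union hX.inv
  have : Finite ↥(X ∪ X⁻¹) := hY
  have hL : {l : List G | l.length = n ∧ ∀ x ∈ l, x ∈ X ∪ X⁻¹}.Finite := by
    have hfin := List.finite_length_eq ↥(X ∪ X⁻¹) n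
    have himg : {l : List G | l.length = n ∧ ∀ x ∈ l, x ∈ X ∪ X⁻¹} ⊆
        (fun l : List ↥(X ∪ X⁻¹) => List.map Subtype.val l) '' {l | l.length = n} := by
      rintro l ⟨hlen, hmem⟩
      refine ⟨l.attach.map (fun x => ⟨x.1, hmem x.1 x.2⟩), by simp [hlen], ?_⟩
      show List.map Subtype.val (List.map _ l.attach) = l
      rw [List.map_map]
      exact List.attach_map_subtype_val l
    exact (hfin.image _).subset himg
  have hsub : sphere X n ⊆ (fun l : List G => l.prod) '' {l | l.length = n ∧ ∀ x ∈ l, x ∈ X ∪ X⁻¹} := by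
    intro g hg
    obtain ⟨l, hlen, hmem, hprod⟩ := exists_list_of_mem_sphere hn hg
    exact ⟨l, ⟨hlen, fun x hx => by rcases hmem x hx with h | h
                                    · exact Or.inl h
                                    · exact Or.inr (Set.mem_inv.mpr h)⟩, hprod⟩
  exact (hL.image _).subset hsub

set_option maxHeartbeats 1000000 in
theorem statement9 {G : Type*} [Group G] (X : Set G) (hXfin : X.Finite)
    (hXgen : Subgroup.closure X = ⊤) (H K : Subgroup G)
    (hcomm : ∀ h ∈ H, ∀ k ∈ K, h * k = k * h)
    (hinj : Function.Injective (fun p : H × K => (p.1 : G) * (p.2 : G)))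
    (hadd : ∀ h ∈ H, ∀ k ∈ K, wordLength X (h * k) = wordLength X h + wordLength X k)
    (αH αK : ℕ) (lam C : ℝ) (hlam : 1 ≤ lam) (hC : 0 < C)
    (hH : ∀ n : ℕ, 1 ≤ n →
      C * (n : ℝ) ^ αH * lam ^ n ≤ (Nat.card (((H : Set G) ∩ sphere X n : Set G)) : ℝ))
    (hK : ∀ n : ℕ, 1 ≤ n →
      C * (n : ℝ) ^ αK * lam ^ n ≤ (Nat.card (((K : Set G) ∩ sphere X n : Set G)) : ℝ)) :
    Filter.Tendsto (fun n : ℕ =>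
        (Nat.card ((((H : Set G) * (K : Set G)) ∩ sphere X n : Set G)) : ℝ) /
          ((n : ℝ) ^ αH * lam ^ n)) Filter.atTop Filter.atTop ∧
    ¬ ∃ Dt : ℝ, 0 < Dt ∧ ∀ n : ℕ, 1 ≤ n →
        (Nat.card ((((H : Set G) * (K : Set G)) ∩ sphere X n : Set G)) : ℝ) ≤
          Dt * (n : ℝ) ^ αH * lam ^ n := by
  classical
  have hlam0 : (0:ℝ) < lam := lt_of_lt_of_le one_pos hlam
  -- uniqueness of decomposition
  have huniq : ∀ h ∈ H, ∀ k ∈ K, ∀ h' ∈ H, ∀ k' ∈ K,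
      h * k = h' * k' → h = h' ∧ k = k' := by
    intro h hh k hk h' hh' k' hk' he
    have := hinj (a₁ := (⟨h, hh⟩, ⟨k, hk⟩)) (a₂ := (⟨h', hh'⟩, ⟨k', hk'⟩)) he
    exact ⟨congrArg (fun p => (p.1 : G)) this, congrArg (fun p => (p.2 : G)) this⟩
  set f : ℕ → ℝ := fun n =>
    (Nat.card ((((H : Set G) * (K : Set G)) ∩ sphere X n : Set G)) : ℝ) /
      ((n : ℝ) ^ αH * lam ^ n) with hf
  set c : ℝ := C * C / (2 * (4:ℝ) ^ αH) with hc
  have hc0 : 0 < c := by positivity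
  have key : ∀ n : ℕ, 2 ≤ n → c * n ≤ f n := by
    intro n hn
    set m := n / 2 with hm
    have hm1 : 1 ≤ m := by omega
    have hfinH : ∀ i : ℕ, 1 ≤ i → ((H : Set G) ∩ sphere X i).Finite :=
      fun i hi => (sphere_finite hXfin hi).subset Set.inter_subset_right
    have hfinK : ∀ i : ℕ, 1 ≤ i → ((K : Set G) ∩ sphere X i).Finite :=
      fun i hi => (sphere_finite hXfin hi).subset Set.inter_subset_right
    have hfinT : (((H : Set G) * (K : Set G)) ∩ sphere X n).Finite :=
      (sphere_finite hXfin (by omega)).subset Set.inter_subset_right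
    set Hs : ℕ → Finset G := fun i => if h : 1 ≤ i then (hfinH i h).toFinset else ∅ with hHs
    set Ks : ℕ → Finset G := fun i => if h : 1 ≤ i then (hfinK i h).toFinset else ∅ with hKs
    have hHsmem : ∀ i : ℕ, 1 ≤ i → ∀ g : G, g ∈ Hs i ↔ g ∈ H ∧ wordLength X g = i := by
      intro i hi g; simp [hHs, dif_pos hi, Set.Finite.mem_toFinset, sphere, Set.mem_inter_iff]
    have hKsmem : ∀ i : ℕ, 1 ≤ i → ∀ g : G, g ∈ Ks i ↔ g ∈ K ∧ wordLength X g = i := by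
      intro i hi g; simp [hKs, dif_pos hi, Set.Finite.mem_toFinset, sphere, Set.mem_inter_iff]
    set A : ℕ → Finset G := fun i => ((Hs i) ×ˢ (Ks (n - i))).image (fun p => p.1 * p.2) with hA
    set s : Finset ℕ := Finset.Icc m (n - 1) with hs
    have hrange : ∀ i ∈ s, 1 ≤ i ∧ 1 ≤ n - i ∧ i + (n - i) = n := by
      intro i hi
      rw [hs, Finset.mem_Icc] at hi
      omega
    -- A i ⊆ target
    have hAsub : ∀ i ∈ s, A i ⊆ hfinT.toFinset := by
      intro i hi g hg
      obtain ⟨hi1, hi2, hi3⟩ := hrange i hi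
      rw [hA] at hg
      simp only [Finset.mem_image, Finset.mem_product] at hg
      obtain ⟨⟨h, k⟩, ⟨hh, hk⟩, rfl⟩ := hg
      rw [hHsmem i hi1] at hh
      rw [hKsmem (n - i) hi2] at hk
      rw [Set.Finite.mem_toFinset]
      constructor
      · exact Set.mul_mem_mul hh.1 hk.1
      · show wordLength X (h * k) = n
        rw [hadd h hh.1 k hk.1, hh.2, hk.2, hi3]
    -- disjointness
    have hdisj : ∀ i ∈ s, ∀ j ∈ s, i ≠ j → Disjoint (A i) (A j) := by
      intro i hi j hj hij
      obtain ⟨hi1, hi2, _⟩ := hrange i hi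
      obtain ⟨hj1, hj2, _⟩ := hrange j hj
      rw [Finset.disjoint_left]
      intro g hgi hgj
      rw [hA] at hgi hgj
      simp only [Finset.mem_image, Finset.mem_product] at hgi hgj
      obtain ⟨⟨h, k⟩, ⟨hh, hk⟩, he⟩ := hgi
      obtain ⟨⟨h', k'⟩, ⟨hh', hk'⟩, he'⟩ := hgj
      rw [hHsmem i hi1] at hh
      rw [hKsmem (n - i) hi2] at hk
      rw [hHsmem j hj1] at hh'
      rw [hKsmem (n - j) hj2] at hk'
      have := huniq h hh.1 k hk.1 h' hh'.1 k' hk'.1 (he.trans he'.symm)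
      apply hij
      rw [← hh.2, ← hh'.2, this.1]
    -- card of A i
    have hAcard : ∀ i ∈ s, (A i).card = (Hs i).card * (Ks (n - i)).card := by
      intro i hi
      obtain ⟨hi1, hi2, _⟩ := hrange i hi
      rw [hA]
      rw [Finset.card_image_of_injOn, Finset.card_product]
      intro p hp q hq he
      simp only [Finset.mem_coe, Finset.mem_product] at hp hq
      have hp1 := (hHsmem i hi1 p.1).mp hp.1
      have hp2 := (hKsmem (n - i) hi2 p.2).mp hp.2
      have hq1 := (hHsmem i hi1 q.1).mp hq.1
      have hq2 := (hKsmem (n - i) hi2 q.2).mp hq.2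
      have := huniq p.1 hp1.1 p.2 hp2.1 q.1 hq1.1 q.2 hq2.1 he
      exact Prod.ext this.1 this.2
    -- the card chain
    have hcard1 : (s.biUnion A).card ≤ hfinT.toFinset.card :=
      Finset.card_le_card (Finset.biUnion_subset.mpr hAsub)
    have hcard2 : (s.biUnion A).card = ∑ i ∈ s, (Hs i).card * (Ks (n - i)).card := by
      rw [Finset.card_biUnion hdisj]
      exact Finset.sum_congr rfl hAcard
    have hTcard : (Nat.card ((((H : Set G) * (K : Set G)) ∩ sphere X n : Set G)) : ℝ)
        = hfinT.toFinset.card := by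
      rw [Nat.card_coe_set_eq, Set.ncard_eq_toFinset_card _ hfinT]
    -- per-term lower bound
    set b : ℝ := C * C * ((n : ℝ) / 4) ^ αH * lam ^ n with hb
    have hterm : ∀ i ∈ s, b ≤ ((Hs i).card * (Ks (n - i)).card : ℝ) := by
      intro i hi
      obtain ⟨hi1, hi2, hi3⟩ := hrange i hi
      have hHcard : C * (i : ℝ) ^ αH * lam ^ i ≤ ((Hs i).card : ℝ) := by
        have := hH i hi1
        rwa [Nat.card_coe_set_eq, Set.ncard_eq_toFinset_card _ (hfinH i hi1),
          show (hfinH i hi1).toFinset = Hs i by rw [hHs]; simp [dif_pos hi1]] at this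
      have hKcard : C * ((n - i : ℕ) : ℝ) ^ αK * lam ^ (n - i) ≤ ((Ks (n - i)).card : ℝ) := by
        have := hK (n - i) hi2
        rwa [Nat.card_coe_set_eq, Set.ncard_eq_toFinset_card _ (hfinK (n - i) hi2),
          show (hfinK (n - i) hi2).toFinset = Ks (n - i) by rw [hKs]; simp [dif_pos hi2]] at this
      have e1 : ((n : ℝ) / 4) ^ αH ≤ (i : ℝ) ^ αH := by
        apply pow_le_pow_left₀ (by positivity)
        have : n ≤ 4 * i := by
          have : m ≤ i := (Finset.mem_Icc.mp (hs ▸ hi)).1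
          omega
        have : (n : ℝ) ≤ 4 * (i : ℝ) := by exact_mod_cast this
        linarith
      have e2 : (1 : ℝ) ≤ ((n - i : ℕ) : ℝ) ^ αK := by
        apply one_le_pow₀
        exact_mod_cast hi2
      have e3 : lam ^ n = lam ^ i * lam ^ (n - i) := by
        rw [← pow_add]; congr 1; omega
      calc b = (C * ((n : ℝ) / 4) ^ αH * lam ^ i) * (C * 1 * lam ^ (n - i)) := by
              rw [hb, e3]; ring
        _ ≤ (C * (i : ℝ) ^ αH * lam ^ i) * (C * ((n - i : ℕ) : ℝ) ^ αK * lam ^ (n - i)) := by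
              apply mul_le_mul
              · gcongr
              · gcongr
              · positivity
              · positivity
        _ ≤ ((Hs i).card : ℝ) * ((Ks (n - i)).card : ℝ) :=
              mul_le_mul hHcard hKcard (by positivity) (Nat.cast_nonneg _)
    have hsum : (s.card : ℝ) * b ≤ ∑ i ∈ s, ((Hs i).card * (Ks (n - i)).card : ℝ) := by
      have := Finset.card_nsmul_le_sum s (fun i => ((Hs i).card * (Ks (n - i)).card : ℝ)) b hterm
      simpa [nsmul_eq_mul] using this
    have hscard : s.card = n - m := by
      rw [hs, Nat.card_Icc]; omega
    have hsn : (n : ℝ) / 2 ≤ (s.card : ℝ) := by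
      rw [hscard]
      have : n ≤ 2 * (n - m) := by omega
      have : (n : ℝ) ≤ 2 * ((n - m : ℕ) : ℝ) := by exact_mod_cast this
      linarith
    -- combine
    have hTlb : (n : ℝ) / 2 * b ≤ (Nat.card ((((H : Set G) * (K : Set G)) ∩ sphere X n : Set G)) : ℝ) := by
      rw [hTcard]
      calc (n : ℝ) / 2 * b ≤ (s.card : ℝ) * b := by
            apply mul_le_mul_of_nonneg_right hsn (by rw [hb]; positivity)
        _ ≤ ∑ i ∈ s, ((Hs i).card * (Ks (n - i)).card : ℝ) := hsum
        _ = ((∑ i ∈ s, (Hs i).card * (Ks (n - i)).card : ℕ) : ℝ) := by push_cast; ring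
        _ = ((s.biUnion A).card : ℝ) := by rw [hcard2]
        _ ≤ (hfinT.toFinset.card : ℝ) := by exact_mod_cast hcard1
    have hn0 : (0 : ℝ) < (n : ℝ) := by positivity
    have hdenom : (0 : ℝ) < (n : ℝ) ^ αH * lam ^ n := by positivity
    rw [hf]
    rw [le_div_iff₀ hdenom]
    calc c * (n : ℝ) * ((n : ℝ) ^ αH * lam ^ n) = (n : ℝ) / 2 * b := by
          rw [hc, hb, div_pow]
          field_simp
      _ ≤ _ := hTlb
  -- conclude
  have htend : Filter.Tendsto f Filter.atTop Filter.atTop := by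
    apply Filter.tendsto_atTop_mono' Filter.atTop
      (Filter.eventually_atTop.mpr ⟨2, fun n hn => key n hn⟩)
    have : Filter.Tendsto (fun n : ℕ => (n : ℝ)) Filter.atTop Filter.atTop :=
      tendsto_natCast_atTop_atTop
    exact Filter.Tendsto.const_mul_atTop hc0 this
  refine ⟨htend, ?_⟩
  rintro ⟨Dt, hDt, hbound⟩
  have h1 : ∀ᶠ n : ℕ in Filter.atTop, Dt < f n := htend.eventually_gt_atTop Dt
  have h2 : ∀ᶠ n : ℕ in Filter.atTop, 1 ≤ n := Filter.eventually_ge_atTop 1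
  obtain ⟨n, hn1, hn2⟩ := (h1.and h2).exists
  have hdenom : (0 : ℝ) < (n : ℝ) ^ αH * lam ^ n := by
    have : (0:ℝ) < (n:ℝ) := by exact_mod_cast hn2
    positivity
  have : f n ≤ Dt := by
    rw [hf, div_le_iff₀ hdenom]
    calc (Nat.card ((((H : Set G) * (K : Set G)) ∩ sphere X n : Set G)) : ℝ)
        ≤ Dt * (n : ℝ) ^ αH * lam ^ n := hbound n hn2
      _ = Dt * ((n : ℝ) ^ αH * lam ^ n) := by ring
  linarith
end

section
/- Let k ≥ 2, let F_k be the free group on x_1, …, x_k, and let G = F_k × F_k with finite generating set X = {(x_i, 1) : 1 ≤ i ≤ k} ∪ {(1, x_i) : 1 ≤ i ≤ k}. Then there exist a constant c > 0 and N ∈ ℕ such that for all n ≥ N, the number of commuting pairs satisfies |{(x,y) ∈ B_{G,X}(n)² : xy = yx}| ≥ c·|B_{G,X}(n)|²/n². In particular, the sequence d_n = |{(x,y) ∈ B_{G,X}(n)² : xy = yx}|/|B_{G,X}(n)|² converges to zero at most polynomially fast. -/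
/-- The ball of radius `n` in `G` with respect to `X`. -/
noncomputable def ball {G : Type*} [Group G] (X : Set G) (n : ℕ) : Set G :=
  {g | wordLength X g ≤ n}

def commutingPairs {G : Type*} [Mul G] (S : Set G) : Set (G × G) :=
  {p | p.1 ∈ S ∧ p.2 ∈ S ∧ p.1 * p.2 = p.2 * p.1}

section WordLength

variable {G : Type*} [Group G] {X : Set G}

theorem wordLength_le_length {l : List G} (hl : ∀ x ∈ l, x ∈ X ∨ x⁻¹ ∈ X) :
    wordLength X l.prod ≤ l.length :=
  Nat.sInf_le ⟨l, rfl, hl, rfl⟩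

theorem exists_list_length_eq_wordLength {g : G} {l : List G}
    (hl : ∀ x ∈ l, x ∈ X ∨ x⁻¹ ∈ X) (hg : l.prod = g) :
    ∃ m : List G, m.length = wordLength X g ∧ (∀ x ∈ m, x ∈ X ∨ x⁻¹ ∈ X) ∧ m.prod = g :=
  Nat.sInf_mem (s := {n | ∃ l : List G, l.length = n ∧ (∀ x ∈ l, x ∈ X ∨ x⁻¹ ∈ X) ∧ l.prod = g})
    ⟨_, l, rfl, hl, hg⟩

theorem apply_prod_le_length_of_subadditive {f : G → ℕ} (h_one : f 1 = 0)
    (h_mul : ∀ a b, f (a * b) ≤ f a + f b) (h_gen : ∀ x, x ∈ X ∨ x⁻¹ ∈ X → f x ≤ 1) :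
    ∀ {l : List G}, (∀ x ∈ l, x ∈ X ∨ x⁻¹ ∈ X) → f l.prod ≤ l.length
  | [], _ => by simp [h_one]
  | x :: l, hl => by
    have := h_mul x l.prod
    have := h_gen x (hl x List.mem_cons_self)
    have := apply_prod_le_length_of_subadditive h_one h_mul h_gen
      fun y hy => hl y (List.mem_cons_of_mem x hy)
    simp only [List.prod_cons, List.length_cons]
    omega

theorem wordLength_eq_of_subadditive {f : G → ℕ} (h_one : f 1 = 0)
    (h_mul : ∀ a b, f (a * b) ≤ f a + f b) (h_gen : ∀ x, x ∈ X ∨ x⁻¹ ∈ X → f x ≤ 1)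
    (h_rep : ∀ g, ∃ l : List G, l.length ≤ f g ∧ (∀ x ∈ l, x ∈ X ∨ x⁻¹ ∈ X) ∧ l.prod = g)
    (g : G) : wordLength X g = f g := by
  obtain ⟨l, hlen, hl, rfl⟩ := h_rep g
  obtain ⟨m, hm, hmX, hmprod⟩ := exists_list_length_eq_wordLength hl rfl
  refine le_antisymm ((wordLength_le_length hl).trans hlen) ?_
  calc f l.prod = f m.prod := by rw [hmprod]
    _ ≤ m.length := apply_prod_le_length_of_subadditive h_one h_mul h_gen hmX
    _ = wordLength X l.prod := hm

end WordLength

namespace FreeGroup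

variable {α : Type*}

theorem exists_isReduced_append_cons [Nontrivial α] {w v : List (α × Bool)}
    (hw : IsReduced w) (hv : IsReduced v) : ∃ t, IsReduced (w ++ t :: v) := by
  obtain ⟨a, ha⟩ : ∃ a : α, ∀ x ∈ w.getLast?, x.1 ≠ a := by
    rcases w.getLast? with _ | x
    · exact ⟨Classical.arbitrary α, by simp⟩
    · obtain ⟨a, ha⟩ := exists_ne x.1
      exact ⟨a, by simpa [eq_comm] using ha⟩
  -- the new letter's generator differs from that of the last letter of `w`, and its sign is
  -- that of the first letter of `v`
  refine ⟨(a, (v.head?.map Prod.snd).getD true), ?_⟩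
  have hleft : IsReduced (w ++ [(a, (v.head?.map Prod.snd).getD true)]) :=
    List.isChain_append.2 ⟨hw, List.isChain_singleton _, fun x hx y hy => by
      simp only [List.head?_cons, Option.mem_def, Option.some.injEq] at hy
      subst hy
      exact fun h => absurd h (ha x hx)⟩
  have hright : IsReduced ([(a, (v.head?.map Prod.snd).getD true)] ++ v) :=
    List.isChain_append.2 ⟨List.isChain_singleton _, hv, fun x hx y hy => by
      simp only [List.getLast?_singleton, Option.mem_def, Option.some.injEq] at hx
      subst hx
      simp [Option.mem_def.1 hy]⟩
  simpa using hleft.append_overlap hright (List.cons_ne_nil _ _)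

def prodGens (α : Type*) : Set (FreeGroup α × FreeGroup α) :=
  (Set.range fun i => (of i, 1)) ∪ Set.range fun i => (1, of i)

theorem lift_of_one : lift (fun i => (of i, 1)) = MonoidHom.inl (FreeGroup α) (FreeGroup α) :=
  ext_hom _ _ fun _ => by simp

theorem lift_one_of : lift (fun i => (1, of i)) = MonoidHom.inr (FreeGroup α) (FreeGroup α) :=
  ext_hom _ _ fun _ => by simp

variable [DecidableEq α]

theorem exists_list_prod_eq_lift {G : Type*} [Group G] (f : α → G) (g : FreeGroup α) :
    ∃ l : List G, l.length = g.norm ∧ (∀ x ∈ l, x ∈ Set.range f ∨ x⁻¹ ∈ Set.range f) ∧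
      l.prod = lift f g := by
  refine ⟨g.toWord.map fun x => cond x.2 (f x.1) (f x.1)⁻¹, by simp [norm], ?_, ?_⟩
  · simp only [List.mem_map]
    rintro _ ⟨⟨a, _ | _⟩, -, rfl⟩ <;> simp
  · rw [← lift_mk, mk_toWord]

theorem finite_setOf_norm_le [Finite α] (n : ℕ) : {g : FreeGroup α | g.norm ≤ n}.Finite :=
  (List.finite_length_le _ n).preimage toWord_injective.injOn

theorem IsReduced.toWord_mk {w : List (α × Bool)} (hw : IsReduced w) : (mk w).toWord = w := by
  rw [FreeGroup.toWord_mk, hw.reduce_eq]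

theorem card_setOf_norm_le_succ_le [Finite α] (n : ℕ) :
    Nat.card {g : FreeGroup α | g.norm ≤ n + 1} ≤
      (2 * Nat.card α + 1) * Nat.card {g : FreeGroup α | g.norm ≤ n} := by
  have := (finite_setOf_norm_le (α := α) n).to_subtype
  let φ : {g : FreeGroup α | g.norm ≤ n + 1} → Option (α × Bool) × {g : FreeGroup α | g.norm ≤ n} :=
    fun g => (g.1.toWord.head?, ⟨mk g.1.toWord.tail,
      norm_mk_le.trans (by simpa [norm] using g.2)⟩)
  have hφ : Function.Injective φ := by
    rintro ⟨g, hg⟩ ⟨h, hh⟩ hgh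
    simp only [φ, Prod.mk.injEq, Subtype.mk.injEq] at hgh
    obtain ⟨hhead, htail⟩ := hgh
    replace htail := congrArg toWord htail
    rw [(isReduced_toWord.infix (List.tail_suffix _).isInfix).toWord_mk,
      (isReduced_toWord.infix (List.tail_suffix _).isInfix).toWord_mk] at htail
    rw [Subtype.mk.injEq, ← toWord_inj]
    generalize g.toWord = u at hhead htail ⊢
    generalize h.toWord = v at hhead htail ⊢
    cases u <;> cases v <;> simp_all
  calc Nat.card {g : FreeGroup α | g.norm ≤ n + 1}
      ≤ Nat.card (Option (α × Bool) × {g : FreeGroup α | g.norm ≤ n}) :=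
        Nat.card_le_card_of_injective φ hφ
    _ = (2 * Nat.card α + 1) * Nat.card {g : FreeGroup α | g.norm ≤ n} := by
        have := Fintype.ofFinite α
        simp [Nat.card_eq_fintype_card, mul_comm]

theorem card_setOf_norm_add_norm_le [Finite α] [Nontrivial α] (n : ℕ) :
    Nat.card {p : FreeGroup α × FreeGroup α | p.1.norm + p.2.norm ≤ n} ≤
      (n + 1) * Nat.card {g : FreeGroup α | g.norm ≤ n + 1} := by
  have := (finite_setOf_norm_le (α := α) (n + 1)).to_subtype
  choose t ht using fun p : FreeGroup α × FreeGroup α =>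
    exists_isReduced_append_cons (isReduced_toWord (x := p.1)) (isReduced_toWord (x := p.2))
  let φ : {p : FreeGroup α × FreeGroup α | p.1.norm + p.2.norm ≤ n} →
      Fin (n + 1) × {g : FreeGroup α | g.norm ≤ n + 1} :=
    fun p => (⟨p.1.1.norm, Nat.lt_succ_of_le (Nat.le_of_add_right_le p.2)⟩,
      ⟨mk (p.1.1.toWord ++ t p :: p.1.2.toWord), by
        have : p.1.1.norm + p.1.2.norm ≤ n := p.2
        show (mk _).norm ≤ n + 1
        simp only [norm, (ht p).toWord_mk, List.length_append, List.length_cons] at this ⊢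
        omega⟩)
  have hφ : Function.Injective φ := by
    rintro ⟨⟨a, b⟩, hab⟩ ⟨⟨c, d⟩, hcd⟩ h
    simp only [φ, Prod.mk.injEq, Subtype.mk.injEq, Fin.mk.injEq] at h
    obtain ⟨hlen, hword⟩ := h
    replace hword := congrArg toWord hword
    rw [(ht (a, b)).toWord_mk, (ht (c, d)).toWord_mk] at hword
    obtain ⟨hac, hbd⟩ := List.append_inj hword hlen
    simp only [List.cons.injEq] at hbd
    exact Subtype.ext (Prod.ext (toWord_injective hac) (toWord_injective hbd.2))
  calc Nat.card {p : FreeGroup α × FreeGroup α | p.1.norm + p.2.norm ≤ n}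
      ≤ Nat.card (Fin (n + 1) × {g : FreeGroup α | g.norm ≤ n + 1}) :=
        Nat.card_le_card_of_injective φ hφ
    _ = (n + 1) * Nat.card {g : FreeGroup α | g.norm ≤ n + 1} := by
        rw [Nat.card_prod, Nat.card_eq_fintype_card (α := Fin _), Fintype.card_fin]

theorem wordLength_prodGens (g : FreeGroup α × FreeGroup α) :
    wordLength (prodGens α) g = g.1.norm + g.2.norm := by
  refine wordLength_eq_of_subadditive (f := fun g => g.1.norm + g.2.norm) (by simp [norm_one])
    (fun a b => ?_) ?_ (fun ⟨a, b⟩ => ?_) g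
  · have := norm_mul_le a.1 b.1
    have := norm_mul_le a.2 b.2
    simp only [Prod.fst_mul, Prod.snd_mul]
    omega
  · have hgen : ∀ y ∈ prodGens α, y.1.norm + y.2.norm ≤ 1 := by
      rintro _ (⟨i, rfl⟩ | ⟨i, rfl⟩) <;> simp [norm_of]
    rintro x (hx | hx)
    · exact hgen x hx
    · simpa [norm_inv_eq] using hgen _ hx
  · obtain ⟨la, hla, hlaX, hlaprod⟩ :=
      exists_list_prod_eq_lift (G := FreeGroup α × FreeGroup α) (fun i => (of i, 1)) a
    obtain ⟨lb, hlb, hlbX, hlbprod⟩ :=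
      exists_list_prod_eq_lift (G := FreeGroup α × FreeGroup α) (fun i => (1, of i)) b
    refine ⟨la ++ lb, by simp [hla, hlb], fun x hx => ?_, ?_⟩
    · rcases List.mem_append.1 hx with hx | hx
      · exact (hlaX x hx).imp (fun h => Or.inl h) (fun h => Or.inl h)
      · exact (hlbX x hx).imp (fun h => Or.inr h) (fun h => Or.inr h)
    · simp [hlaprod, hlbprod, lift_of_one, lift_one_of]

theorem ball_prodGens (n : ℕ) :
    ball (prodGens α) n = {g | g.1.norm + g.2.norm ≤ n} := by
  ext g
  simp [ball, wordLength_prodGens]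

theorem card_ball_prodGens_le [Finite α] [Nontrivial α] (n : ℕ) :
    Nat.card (ball (prodGens α) n) ≤
      (n + 1) * (2 * Nat.card α + 1) * Nat.card {g : FreeGroup α | g.norm ≤ n} := by
  rw [ball_prodGens, mul_assoc]
  exact (card_setOf_norm_add_norm_le n).trans
    (Nat.mul_le_mul_left _ (card_setOf_norm_le_succ_le n))

theorem sq_card_setOf_norm_le_le_card_commutingPairs [Finite α] (n : ℕ) :
    Nat.card {g : FreeGroup α | g.norm ≤ n} ^ 2 ≤
      Nat.card (commutingPairs (ball (prodGens α) n)) := by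
  have hfin : (ball (prodGens α) n).Finite := by
    rw [ball_prodGens]
    refine ((finite_setOf_norm_le n).prod (finite_setOf_norm_le n)).subset fun g hg => ?_
    exact ⟨Nat.le_of_add_right_le hg, Nat.le_of_add_left_le hg⟩
  have : Finite (commutingPairs (ball (prodGens α) n)) :=
    ((hfin.prod hfin).subset fun p hp => ⟨hp.1, hp.2.1⟩).to_subtype
  let φ : {g : FreeGroup α | g.norm ≤ n} × {g : FreeGroup α | g.norm ≤ n} →
      commutingPairs (ball (prodGens α) n) :=
    fun ab => ⟨((ab.1, 1), (1, ab.2)), by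
      have h1 : ab.1.1.norm ≤ n := ab.1.2
      have h2 : ab.2.1.norm ≤ n := ab.2.2
      refine ⟨?_, ?_, by simp⟩ <;> simpa [ball_prodGens, norm_one]⟩
  have hφ : Function.Injective φ := by
    rintro ⟨⟨a, ha⟩, ⟨b, hb⟩⟩ ⟨⟨c, hc⟩, ⟨d, hd⟩⟩ h
    replace h := congrArg Subtype.val h
    simp only [φ, Prod.mk.injEq] at h
    simp [h.1.1, h.2.2]
  simpa [sq, Nat.card_prod] using Nat.card_le_card_of_injective φ hφ

theorem sq_card_ball_prodGens_le [Finite α] [Nontrivial α] {n : ℕ} (hn : 1 ≤ n) :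
    Nat.card (ball (prodGens α) n) ^ 2 ≤
      (2 * n * (2 * Nat.card α + 1)) ^ 2 * Nat.card (commutingPairs (ball (prodGens α) n)) :=
  calc Nat.card (ball (prodGens α) n) ^ 2
      ≤ ((n + 1) * (2 * Nat.card α + 1) * Nat.card {g : FreeGroup α | g.norm ≤ n}) ^ 2 := by
        gcongr
        exact card_ball_prodGens_le n
    _ ≤ (2 * n * (2 * Nat.card α + 1) * Nat.card {g : FreeGroup α | g.norm ≤ n}) ^ 2 := by
        gcongr
        omega
    _ = (2 * n * (2 * Nat.card α + 1)) ^ 2 * Nat.card {g : FreeGroup α | g.norm ≤ n} ^ 2 := by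
        ring
    _ ≤ _ := Nat.mul_le_mul_left _ (sq_card_setOf_norm_le_le_card_commutingPairs n)

end FreeGroup

theorem statement13 (k : ℕ) (hk : 2 ≤ k)
    (X : Set (FreeGroup (Fin k) × FreeGroup (Fin k)))
    (hX : X = (Set.range fun i : Fin k =>
          ((FreeGroup.of i : FreeGroup (Fin k)), (1 : FreeGroup (Fin k)))) ∪
        (Set.range fun i : Fin k =>
          ((1 : FreeGroup (Fin k)), (FreeGroup.of i : FreeGroup (Fin k))))) :
    ∃ c : ℝ, 0 < c ∧ ∃ N : ℕ, ∀ n : ℕ, N ≤ n →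
      c * (Nat.card (ball X n) : ℝ) ^ 2 / (n : ℝ) ^ 2 ≤
        (Nat.card {p : (FreeGroup (Fin k) × FreeGroup (Fin k)) ×
            (FreeGroup (Fin k) × FreeGroup (Fin k)) |
          p.1 ∈ ball X n ∧ p.2 ∈ ball X n ∧ p.1 * p.2 = p.2 * p.1} : ℝ) := by
  obtain rfl : X = FreeGroup.prodGens (Fin k) := hX
  have : Nontrivial (Fin k) := Fin.nontrivial_iff_two_le.2 hk
  set q : ℕ := 2 * Nat.card (Fin k) + 1
  refine ⟨1 / (4 * q ^ 2), by positivity, 1, fun n hn => ?_⟩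
  change _ ≤ (Nat.card (commutingPairs (ball (FreeGroup.prodGens (Fin k)) n)) : ℝ)
  have hsq : (Nat.card (ball (FreeGroup.prodGens (Fin k)) n) : ℝ) ^ 2 ≤
      (2 * n * q) ^ 2 * Nat.card (commutingPairs (ball (FreeGroup.prodGens (Fin k)) n)) := by
    exact_mod_cast FreeGroup.sq_card_ball_prodGens_le hn
  have hn₀ : (0 : ℝ) < n := by exact_mod_cast hn
  have hq₀ : (0 : ℝ) < q := by positivity
  rw [div_le_iff₀ (by positivity)]
  calc 1 / (4 * (q : ℝ) ^ 2) * (Nat.card (ball (FreeGroup.prodGens (Fin k)) n) : ℝ) ^ 2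
      ≤ 1 / (4 * (q : ℝ) ^ 2) * ((2 * n * q) ^ 2 *
          Nat.card (commutingPairs (ball (FreeGroup.prodGens (Fin k)) n))) := by gcongr
    _ = _ := by field_simp; ring
end

section
/- For n ∈ ℤ_{≥0} let b(n) be the sum of the digits in the binary representation of n, and set a_n = 2^{b(n)}. Then: (1) the sequence (a_n) is submultiplicative, i.e. a_{m+n} ≤ a_m·a_n for all m, n ≥ 0; (2) a_{2^n − 1} = 2^n and a_{2^n} = 2 for all n ≥ 0; (3) liminf_{n→∞} a_n/n = 0 and limsup_{n→∞} a_n = ∞, so there are no constants α ∈ ℤ_{≥0}, λ ∈ [1,∞) and D > C > 0 with C·n^α·λ^n ≤ a_n ≤ D·n^α·λ^n for all n ≥ 1; and (4) the formal power series ∑_{n≥0} a_n t^n is not a rational function. -/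
/-!
Write `a n = 2 ^ s n` with `s` the binary digit sum. Submultiplicativity of `a` is subadditivity
of `s`, which follows from Legendre's formula `v₂(n!) = n - s n` and `m! n! ∣ (m + n)!`.
Prefixing a `1` to the binary digits gives `a (2 ^ k + s) = 2 * a s` for `s < 2 ^ k`, so `a = 2` at
every power of two while `a (2 ^ k - 1) = 2 ^ k`. These two subsequences give the liminf and limsup,
and since `a (2 ^ k - 1) / a (2 ^ k)` is unbounded, `a` cannot be squeezed between two multiples
of a nondecreasing `n ^ α * λ ^ n`. Finally, the coefficients of a rational power series eventually
satisfy a linear recurrence of some order `d`, so agreement of two windows of length `d` propagates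
forever; but the windows of `a` at `2 ^ k` and `2 ^ (k + 1)` agree for large `k`, while
`a (2 ^ (k + 1)) = 2` and `a (2 ^ (k + 1) + 2 ^ k) = 4`.
-/

open Filter Topology Polynomial Finset

namespace Nat

theorem digits_sum_add_le (p : ℕ) [Fact p.Prime] (m n : ℕ) :
    (p.digits (m + n)).sum ≤ (p.digits m).sum + (p.digits n).sum := by
  have hv : padicValNat p (m ! * n !) ≤ padicValNat p (m + n)! :=
    (padicValNat_dvd_iff_le (factorial_ne_zero _)).1
      (pow_padicValNat_dvd.trans (factorial_mul_factorial_dvd_factorial_add m n))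
  rw [padicValNat.mul (factorial_ne_zero _) (factorial_ne_zero _)] at hv
  have hlegendre := Nat.mul_le_mul_left (p - 1) hv
  simp only [mul_add, sub_one_mul_padicValNat_factorial] at hlegendre
  have := digit_sum_le p m
  have := digit_sum_le p n
  have := digit_sum_le p (m + n)
  omega

theorem digits_base_pow_sub_one {b : ℕ} (hb : 1 < b) (k : ℕ) :
    b.digits (b ^ k - 1) = List.replicate k (b - 1) := by
  induction k with
  | zero => simp
  | succ k ih =>
    obtain ⟨c, hc⟩ : ∃ c, b ^ k = c + 1 :=
      ⟨b ^ k - 1, by have := one_le_pow k b (by omega); omega⟩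
    have hsplit : b ^ (k + 1) - 1 = (b - 1) + b * (b ^ k - 1) := by
      rw [pow_succ, hc, add_tsub_cancel_right, add_mul, one_mul, mul_comm]
      omega
    rw [hsplit, digits_add b hb _ _ (by omega) (Or.inl (by omega)), ih, List.replicate_succ]

theorem digits_sum_add_base_pow_mul {b k s m : ℕ} (hb : 1 < b) (hs : s < b ^ k) (hm : 0 < m) :
    (b.digits (s + b ^ k * m)).sum = (b.digits s).sum + (b.digits m).sum := by
  obtain ⟨t, rfl⟩ := exists_add_of_le ((digits_length_le_iff hb s).2 hs)
  simp [← digits_append_zeroes_append_digits hb hm]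

end Nat

namespace PowerSeries

variable {K : Type*} [Field K]

def IsRational (f : PowerSeries K) : Prop :=
  ∃ p q : K[X], q ≠ 0 ∧ (q : PowerSeries K) * f = p

theorem sum_coeff_mul_coeff_eq_zero_of_natDegree_lt {f : PowerSeries K} {p q : K[X]}
    (h : (q : PowerSeries K) * f = p) {n : ℕ} (hn : p.natDegree < n) :
    ∑ i ∈ range (n + 1), q.coeff i * coeff (n - i) f = 0 := by
  simpa only [coeff_mul, Nat.sum_antidiagonal_eq_sum_range_succ_mk, Polynomial.coeff_coe,
    coeff_eq_zero_of_natDegree_lt hn] using congrArg (coeff n) h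

/-- With `j` and `D` the trailing and leading degrees of the denominator `q`, the coefficient
`q_j ≠ 0` lets one solve `∑_{j ≤ i ≤ D} q_i c_{n-i} = 0` for the latest term: a recurrence of
order `D - j`. -/
theorem IsRational.exists_linearRecurrence {f : PowerSeries K} (hf : f.IsRational) :
    ∃ (E : LinearRecurrence K) (N : ℕ), ∀ n ≥ N, E.IsSolution fun m => coeff (n + m) f := by
  obtain ⟨p, q, hq, h⟩ := hf
  have hlow : ∀ i < q.natTrailingDegree, q.coeff i = 0 := fun i =>
    coeff_eq_zero_of_lt_natTrailingDegree
  have hhigh : ∀ i, q.natDegree < i → q.coeff i = 0 := fun i => coeff_eq_zero_of_natDegree_lt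
  have hjD : q.natTrailingDegree ≤ q.natDegree := natTrailingDegree_le_natDegree _
  have hqj : q.coeff q.natTrailingDegree ≠ 0 := trailingCoeff_nonzero_iff_nonzero.2 hq
  generalize q.natTrailingDegree = j at *
  generalize q.natDegree = D at *
  refine ⟨⟨D - j, fun k => -q.coeff (D - k) / q.coeff j⟩, p.natDegree + 1, fun n hn m => ?_⟩
  have hrec : ∑ k ∈ range (D - j + 1), q.coeff (D - k) * coeff (n + m + k) f = 0 := by
    rw [← sum_coeff_mul_coeff_eq_zero_of_natDegree_lt h (n := n + m + D) (by omega)]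
    refine sum_bij_ne_zero (fun k _ _ => D - k) (fun k hk _ => by rw [mem_range] at hk ⊢; omega)
      (fun k₁ hk₁ _ k₂ hk₂ _ _ => by rw [mem_range] at hk₁ hk₂; omega) (fun i _ hne => ?_)
      (fun k hk _ => by rw [mem_range] at hk; rw [show n + m + D - (D - k) = n + m + k by omega])
    have hi : j ≤ i ∧ i ≤ D := by
      constructor <;> by_contra! hi' <;> simp [hlow, hhigh, hi'] at hne
    refine ⟨D - i, by rw [mem_range]; omega, ?_, by omega⟩
    rwa [show D - (D - i) = i by omega, show n + m + (D - i) = n + m + D - i by omega]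
  rw [sum_range_succ, show D - (D - j) = j by omega] at hrec
  change coeff (n + (m + (D - j))) f =
    ∑ i : Fin (D - j), -q.coeff (D - i) / q.coeff j * coeff (n + (m + i)) f
  simp only [← add_assoc]
  rw [Fin.sum_univ_eq_sum_range (fun i => -q.coeff (D - i) / q.coeff j * coeff (n + m + i) f)]
  simp only [neg_div, neg_mul, sum_neg_distrib, div_mul_eq_mul_div, ← sum_div]
  field_simp
  linear_combination hrec

end PowerSeries

theorem liminf_eq_zero_of_frequently_le {ι : Type*} {l : Filter ι} {u : ι → ℝ}
    (hu : ∀ i, 0 ≤ u i) (hsmall : ∀ ε > 0, ∃ᶠ i in l, u i ≤ ε) : liminf u l = 0 := by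
  have hbdd : IsBoundedUnder (· ≥ ·) l u := isBoundedUnder_of_eventually_ge (.of_forall hu)
  refine le_antisymm (le_of_forall_pos_le_add fun ε hε => ?_)
    (le_liminf_of_le (.of_frequently_le (hsmall 1 one_pos)) (.of_forall hu))
  rw [zero_add]
  exact liminf_le_of_frequently_le (hsmall ε hε) hbdd

theorem mul_le_mul_of_sandwich {u g : ℕ → ℝ} {C D : ℝ} (hC : 0 ≤ C) (hD : 0 ≤ D) {m n : ℕ}
    (hgmn : g m ≤ g n) (hm : u m ≤ D * g m) (hn : C * g n ≤ u n) : C * u m ≤ D * u n :=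
  calc C * u m ≤ C * (D * g n) := by gcongr; exact hm.trans (by gcongr)
    _ = D * (C * g n) := by ring
    _ ≤ D * u n := by gcongr

def twoPowDigitSum (n : ℕ) : ℕ := 2 ^ (Nat.digits 2 n).sum

theorem twoPowDigitSum_add_le (m n : ℕ) :
    twoPowDigitSum (m + n) ≤ twoPowDigitSum m * twoPowDigitSum n := by
  rw [twoPowDigitSum, twoPowDigitSum, twoPowDigitSum, ← pow_add]
  exact Nat.pow_le_pow_right two_pos (Nat.digits_sum_add_le 2 m n)

theorem twoPowDigitSum_two_pow_sub_one (k : ℕ) : twoPowDigitSum (2 ^ k - 1) = 2 ^ k := by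
  simp [twoPowDigitSum, Nat.digits_base_pow_sub_one one_lt_two]

theorem twoPowDigitSum_two_pow_add {k s : ℕ} (hs : s < 2 ^ k) :
    twoPowDigitSum (2 ^ k + s) = 2 * twoPowDigitSum s := by
  rw [twoPowDigitSum, add_comm, ← mul_one (2 ^ k),
    Nat.digits_sum_add_base_pow_mul one_lt_two hs one_pos, pow_add, mul_comm]
  rfl

theorem twoPowDigitSum_two_pow (k : ℕ) : twoPowDigitSum (2 ^ k) = 2 := by
  rw [← add_zero (2 ^ k), twoPowDigitSum_two_pow_add (pow_pos two_pos k)]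
  rfl

theorem liminf_twoPowDigitSum_div_eq_zero :
    liminf (fun n : ℕ => (twoPowDigitSum n : ℝ) / n) atTop = 0 := by
  have hsub : Tendsto (fun k : ℕ => (twoPowDigitSum (2 ^ k) : ℝ) / (2 ^ k : ℕ)) atTop (𝓝 0) := by
    simp only [twoPowDigitSum_two_pow, Nat.cast_pow, Nat.cast_ofNat]
    simpa [div_eq_mul_inv] using (tendsto_pow_atTop_nhds_zero_of_lt_one
      (by norm_num : (0 : ℝ) ≤ 1 / 2) (by norm_num)).const_mul 2
  refine liminf_eq_zero_of_frequently_le (fun n => by positivity) fun ε hε => ?_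
  exact (tendsto_pow_atTop_atTop_of_one_lt one_lt_two).frequently
    (hsub.eventually (ge_mem_nhds hε)).frequently

theorem frequently_le_twoPowDigitSum (M : ℝ) : ∃ᶠ n in atTop, M ≤ (twoPowDigitSum n : ℝ) := by
  have hsub : Tendsto (fun k : ℕ => (twoPowDigitSum (2 ^ k - 1) : ℝ)) atTop atTop := by
    simpa [twoPowDigitSum_two_pow_sub_one] using
      tendsto_pow_atTop_atTop_of_one_lt (one_lt_two : (1 : ℝ) < 2)
  exact ((tendsto_sub_atTop_nat 1).comp (tendsto_pow_atTop_atTop_of_one_lt one_lt_two)).frequently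
    (hsub.eventually_ge_atTop M).frequently

theorem not_exists_sandwich_twoPowDigitSum :
    ¬ ∃ (α : ℕ) (lam C D : ℝ), 1 ≤ lam ∧ 0 < C ∧ C < D ∧ ∀ n : ℕ, 1 ≤ n →
      C * (n : ℝ) ^ α * lam ^ n ≤ (twoPowDigitSum n : ℝ) ∧
        (twoPowDigitSum n : ℝ) ≤ D * (n : ℝ) ^ α * lam ^ n := by
  rintro ⟨α, lam, C, D, hlam, hC, hCD, hbound⟩
  obtain ⟨k, hk⟩ := pow_unbounded_of_one_lt (D / C) (one_lt_two : (1 : ℝ) < 2)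
  have hpos : 1 ≤ 2 ^ (k + 1) - 1 := Nat.le_sub_one_of_lt (Nat.one_lt_two_pow (by omega))
  have key := mul_le_mul_of_sandwich (u := fun n => (twoPowDigitSum n : ℝ))
    (g := fun n : ℕ => (n : ℝ) ^ α * lam ^ n) hC.le (hC.trans hCD).le
    (m := 2 ^ (k + 1) - 1) (n := 2 ^ (k + 1)) (by gcongr <;> omega)
    (by simpa only [mul_assoc] using (hbound _ hpos).2)
    (by simpa only [mul_assoc] using (hbound _ (by omega)).1)
  rw [twoPowDigitSum_two_pow_sub_one, twoPowDigitSum_two_pow] at key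
  push_cast at key
  rw [pow_succ] at key
  rw [div_lt_iff₀ hC] at hk
  linarith

theorem not_isRational_twoPowDigitSum :
    ¬ (PowerSeries.mk fun n => (twoPowDigitSum n : ℝ)).IsRational := by
  intro hf
  obtain ⟨E, N, hE⟩ := hf.exists_linearRecurrence
  have hk : N + E.order < 2 ^ (N + E.order) := Nat.lt_two_pow_self
  set k := N + E.order
  have hk' : 2 ^ k < 2 ^ (k + 1) := Nat.pow_lt_pow_right one_lt_two (lt_add_one k)
  have hwindows := (E.eq_iff_eqOn_range_order _ _ (hE (2 ^ k) (by omega))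
    (hE (2 ^ (k + 1)) (by omega))).2 fun m hm => by
      rw [coe_range, Set.mem_Iio] at hm
      simp only [PowerSeries.coeff_mk]
      rw [twoPowDigitSum_two_pow_add (by omega), twoPowDigitSum_two_pow_add (by omega)]
  have hdiffer := congrFun hwindows (2 ^ k)
  simp only [PowerSeries.coeff_mk] at hdiffer
  rw [← two_mul, ← pow_succ', twoPowDigitSum_two_pow, twoPowDigitSum_two_pow_add hk',
    twoPowDigitSum_two_pow] at hdiffer
  norm_num at hdiffer

theorem statement14 (b : ℕ → ℕ) (hb : ∀ n, b n = (Nat.digits 2 n).sum)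
    (a : ℕ → ℕ) (ha : ∀ n, a n = 2 ^ b n) :
    -- (1) submultiplicativity
    (∀ m n : ℕ, a (m + n) ≤ a m * a n) ∧
    -- (2) values at 2^n - 1 and 2^n
    (∀ n : ℕ, a (2 ^ n - 1) = 2 ^ n ∧ a (2 ^ n) = 2) ∧
    -- (3) liminf a_n/n = 0 and limsup a_n = ∞, so no bounds C n^α λ^n ≤ a_n ≤ D n^α λ^n
    (Filter.liminf (fun n : ℕ => (a n : ℝ) / (n : ℝ)) Filter.atTop = 0) ∧
    (∀ M : ℝ, ∃ᶠ n : ℕ in Filter.atTop, M ≤ (a n : ℝ)) ∧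
    (¬ ∃ (α : ℕ) (lam C D : ℝ), 1 ≤ lam ∧ 0 < C ∧ C < D ∧
      ∀ n : ℕ, 1 ≤ n →
        C * (n : ℝ) ^ α * lam ^ n ≤ (a n : ℝ) ∧ (a n : ℝ) ≤ D * (n : ℝ) ^ α * lam ^ n) ∧
    -- (4) the power series ∑ a_n t^n is not rational
    ¬ ∃ p q : Polynomial ℝ, q ≠ 0 ∧
      (q : PowerSeries ℝ) * PowerSeries.mk (fun n => (a n : ℝ)) = (p : PowerSeries ℝ) := by
  obtain rfl : a = twoPowDigitSum := funext fun n => by rw [ha, hb, twoPowDigitSum]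
  exact ⟨twoPowDigitSum_add_le,
    fun n => ⟨twoPowDigitSum_two_pow_sub_one n, twoPowDigitSum_two_pow n⟩,
    liminf_twoPowDigitSum_div_eq_zero, frequently_le_twoPowDigitSum,
    not_exists_sandwich_twoPowDigitSum, not_isRational_twoPowDigitSum⟩
end
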